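/- arXiv:2208.14829 — 10 statements merged into one kernel-verified Lean document; each statement's English description precedes it below -/
import Mathlib

section
/- Assume v₀ ≤ 0, u₀ < 0 and (1 − v₀)² + u₀ > (E_μ[θ] − v₀)². Then there exists a unique ā ∈ (0, η(1)) satisfying ∫_{θ̄}¹ (η(θ) − ā) dμ(θ) + ā − E_μ[θ] = 0, where θ̄ ∈ [s, 1] is the unique point with η(θ̄) = ā; moreover ā ∈ (0, E_μ[θ]), and the veto mechanism defined by ã*(θ) = ā, p̃*(θ) = 0 for θ < θ̄ and ã*(θ) = η(θ), p̃*(θ) = (η(θ) − ā)/(η(θ) − v₀) for θ ≥ θ̄ is optimal. -/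
open MeasureTheory Set

/-- Principal's ex ante payoff from a veto mechanism `(p, a)`:
`∫ (p θ · u₀ − (1 − p θ) · (a θ − θ)²) dμ(θ)`. -/
noncomputable def vetoPayoff (μ : Measure ℝ) (u₀ : ℝ) (p a : ℝ → ℝ) : ℝ :=
  ∫ θ, (p θ * u₀ - (1 - p θ) * (a θ - θ) ^ 2) ∂μ

/-- A veto mechanism: a measurable veto probability `p : [0,1] → [0,1]` and a measurable
proposed action `a : [0,1] → [−M, M]`. -/
def IsVetoMechanism (M : ℝ) (p a : ℝ → ℝ) : Prop :=
  Measurable p ∧ Measurable a ∧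
    (∀ θ ∈ Set.Icc (0 : ℝ) 1, p θ ∈ Set.Icc (0 : ℝ) 1) ∧
    (∀ θ ∈ Set.Icc (0 : ℝ) 1, a θ ∈ Set.Icc (-M) M)

/-- Incentive compatibility of a veto mechanism: the agent's expected payoff
`p θ · v₀ + (1 − p θ) · a θ` is constant in the state. -/
def IsICVeto (v₀ : ℝ) (p a : ℝ → ℝ) : Prop :=
  ∃ vhat : ℝ, ∀ θ ∈ Set.Icc (0 : ℝ) 1, p θ * v₀ + (1 - p θ) * a θ = vhat

/-- An optimal veto mechanism: incentive compatible and weakly dominating every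
incentive-compatible veto mechanism in principal payoff. -/
def IsOptimalVeto (μ : Measure ℝ) (v₀ u₀ M : ℝ) (p a : ℝ → ℝ) : Prop :=
  IsVetoMechanism M p a ∧ IsICVeto v₀ p a ∧
    ∀ q b : ℝ → ℝ, IsVetoMechanism M q b → IsICVeto v₀ q b →
      vetoPayoff μ u₀ q b ≤ vetoPayoff μ u₀ p a

/-!
Lagrangian duality. Price the incentive constraint `p v₀ + (1 - p) a = v̂` with the multiplier
`2 (θ - x θ)`, where `x` is the candidate's proposal. With `D = (x - v₀)² - (θ - v₀)² - u₀`, the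
Lagrangian of a state is `u₀ - 2 (θ - x) v₀ + (1 - q) (D - (b - x)²)` at a veto probability `q` and
proposal `b`, so the candidate is a pointwise maximiser as soon as `D ≥ 0` and it vetoes only where
`D = 0`: pool at `ā` where `(θ - v₀)² + u₀ ≤ (ā - v₀)²`, propose `η θ` elsewhere. The multiplier
integrates to zero exactly when the candidate's mean proposal `Φ ā = ∫ max (η θ) ā dμ` equals
`E_μ[θ]`. By full support `Φ` is continuous and strictly increasing on `(0, ∞)`, and
`Φ 0 < E_μ[θ] < η 1 ≤ Φ (η 1)`, so `ā` exists and is unique.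
-/

namespace MeasureTheory

variable {α : Type*} [MeasurableSpace α] {μ : Measure α}

theorem integral_lt_integral_of_le_of_lt_on {f g : α → ℝ} {S : Set α} (hf : Integrable f μ)
    (hg : Integrable g μ) (hfg : f ≤ᵐ[μ] g) (hS : 0 < μ S) (hlt : ∀ x ∈ S, f x < g x) :
    ∫ x, f x ∂μ < ∫ x, g x ∂μ := by
  have hpos := (integral_pos_iff_support_of_nonneg_ae (f := fun x => g x - f x)
    (hfg.mono fun x hx => sub_nonneg.2 hx) (hg.sub hf)).2
    (hS.trans_le (measure_mono fun x hx => (sub_pos.2 (hlt x hx)).ne'))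
  rwa [integral_sub hg hf, sub_pos] at hpos

theorem Integrable.max_const [IsFiniteMeasure μ] {g : α → ℝ} (hg : Integrable g μ) (c : ℝ) :
    Integrable (fun x => max (g x) c) μ :=
  hg.sup (integrable_const c)

variable [IsProbabilityMeasure μ] {g : α → ℝ}

theorem le_integral_max (hg : Integrable g μ) (a : ℝ) : a ≤ ∫ x, max (g x) a ∂μ := by
  simpa using integral_mono (integrable_const a) (hg.max_const a)
    fun x => le_max_right (g x) a

theorem lt_integral_max (hg : Integrable g μ) {a : ℝ} {S : Set α} (hS : 0 < μ S)
    (hgS : ∀ x ∈ S, a < g x) : a < ∫ x, max (g x) a ∂μ := by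
  simpa using integral_lt_integral_of_le_of_lt_on (integrable_const a)
    (hg.max_const a) (ae_of_all _ fun x => le_max_right (g x) a) hS
    fun x hx => lt_max_of_lt_left (hgS x hx)

theorem lipschitzWith_integral_max (hg : Integrable g μ) :
    LipschitzWith 1 fun a => ∫ x, max (g x) a ∂μ := by
  refine .of_dist_le_mul fun a b => ?_
  rw [NNReal.coe_one, one_mul, dist_eq_norm,
    ← integral_sub (hg.max_const a) (hg.max_const b)]
  have hpt : ∀ x, ‖max (g x) a - max (g x) b‖ ≤ dist a b := fun x => by
    simpa only [max_comm (g x), Real.norm_eq_abs, Real.dist_eq] using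
      abs_max_sub_max_le_abs a b (g x)
  simpa using norm_integral_le_of_norm_le_const (μ := μ) (ae_of_all _ hpt)

end MeasureTheory

theorem Continuous.integrable_of_ae_mem_Icc {μ : Measure ℝ} [IsFiniteMeasure μ] {a b : ℝ}
    (hμ : ∀ᵐ θ ∂μ, θ ∈ Icc a b) {f : ℝ → ℝ} (hf : Continuous f) : Integrable f μ := by
  rw [← Measure.restrict_eq_self_of_ae_mem hμ]
  exact hf.integrableOn_Icc

theorem max_eq_ite_of_monotoneOn {g : ℝ → ℝ} {S : Set ℝ} (hg : MonotoneOn g S) {t θ : ℝ}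
    (ht : t ∈ S) (hθ : θ ∈ S) : max (g θ) (g t) = if θ < t then g t else g θ := by
  split_ifs with h
  · exact max_eq_right (hg hθ ht h.le)
  · exact max_eq_left (hg ht hθ (not_lt.1 h))

theorem integral_max_eq_setIntegral_add {μ : Measure ℝ} [IsProbabilityMeasure μ]
    (hμ : ∀ᵐ θ ∂μ, θ ∈ Icc (0 : ℝ) 1) {g : ℝ → ℝ} (hgi : Integrable g μ)
    (hg : MonotoneOn g (Icc 0 1)) {t : ℝ} (ht : t ∈ Icc (0 : ℝ) 1) :
    ∫ θ, max (g θ) (g t) ∂μ = (∫ θ in Icc t 1, (g θ - g t) ∂μ) + g t := by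
  have hae : (fun θ => max (g θ) (g t)) =ᵐ[μ]
      fun θ => (Icc t 1).indicator (fun θ => g θ - g t) θ + g t := by
    filter_upwards [hμ] with θ hθ
    rw [max_eq_ite_of_monotoneOn hg ht hθ]
    by_cases h : θ < t
    · simp [h]
    · rw [if_neg h, indicator_of_mem (show θ ∈ Icc t 1 from ⟨not_lt.1 h, hθ.2⟩), sub_add_cancel]
  have hind : Integrable (fun θ => (Icc t 1).indicator (fun θ => g θ - g t) θ) μ :=
    (hgi.sub (integrable_const _)).indicator measurableSet_Icc
  rw [integral_congr_ae hae, integral_add hind (integrable_const _),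
    integral_indicator measurableSet_Icc]
  simp

/-- The paper's `η`; `Real.sqrt` makes it `v₀` where the radicand is negative. -/
noncomputable def vetoCurve (v₀ u₀ θ : ℝ) : ℝ :=
  √((θ - v₀) ^ 2 + u₀) + v₀

section VetoCurve

variable {v₀ u₀ : ℝ}

theorem continuous_vetoCurve : Continuous (vetoCurve v₀ u₀) := by
  unfold vetoCurve; fun_prop

theorem vetoCurve_le_self (hu₀ : u₀ ≤ 0) {θ : ℝ} (hθ : v₀ ≤ θ) : vetoCurve v₀ u₀ θ ≤ θ := by
  have : √((θ - v₀) ^ 2 + u₀) ≤ θ - v₀ :=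
    Real.sqrt_le_iff.2 ⟨sub_nonneg.2 hθ, by linarith⟩
  unfold vetoCurve; linarith

theorem vetoCurve_lt_self (hu₀ : u₀ < 0) {θ : ℝ} (hθ : v₀ < θ) : vetoCurve v₀ u₀ θ < θ := by
  have : √((θ - v₀) ^ 2 + u₀) < θ - v₀ := (Real.sqrt_lt' (sub_pos.2 hθ)).2 (by linarith)
  unfold vetoCurve; linarith

theorem vetoCurve_sqrt_add (hu₀ : u₀ ≤ 0) : vetoCurve v₀ u₀ (√(-u₀) + v₀) = v₀ := by
  simp [vetoCurve, Real.sq_sqrt (neg_nonneg.2 hu₀)]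

theorem radicand_nonneg (hu₀ : u₀ ≤ 0) {θ : ℝ} (hθ : √(-u₀) + v₀ ≤ θ) :
    0 ≤ (θ - v₀) ^ 2 + u₀ := by
  have h : √(-u₀) ^ 2 ≤ (θ - v₀) ^ 2 :=
    pow_le_pow_left₀ (Real.sqrt_nonneg _) (by linarith) 2
  rw [Real.sq_sqrt (neg_nonneg.2 hu₀)] at h
  linarith

theorem sq_vetoCurve_sub (hu₀ : u₀ ≤ 0) {θ : ℝ} (hθ : √(-u₀) + v₀ ≤ θ) :
    (vetoCurve v₀ u₀ θ - v₀) ^ 2 = (θ - v₀) ^ 2 + u₀ := by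
  simp [vetoCurve, Real.sq_sqrt (radicand_nonneg hu₀ hθ)]

theorem monotoneOn_vetoCurve : MonotoneOn (vetoCurve v₀ u₀) (Ici v₀) := fun x hx y _ hxy => by
  have := pow_le_pow_left₀ (sub_nonneg.2 (mem_Ici.1 hx)) (sub_le_sub_right hxy v₀) 2
  unfold vetoCurve
  gcongr

theorem strictMonoOn_vetoCurve (hu₀ : u₀ ≤ 0) :
    StrictMonoOn (vetoCurve v₀ u₀) (Ici (√(-u₀) + v₀)) := fun x hx y _ hxy => by
  have hx₀ : 0 ≤ x - v₀ := by linarith [Real.sqrt_nonneg (-u₀), mem_Ici.1 hx]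
  have hsq := pow_lt_pow_left₀ (sub_lt_sub_right hxy v₀) hx₀ two_ne_zero
  have := Real.sqrt_lt_sqrt (y := (y - v₀) ^ 2 + u₀) (radicand_nonneg hu₀ hx) (by linarith)
  unfold vetoCurve
  linarith

theorem vetoCurve_max_nonpos (hv₀ : v₀ ≤ 0) (hu₀ : u₀ ≤ 0) :
    vetoCurve v₀ u₀ (max 0 (√(-u₀) + v₀)) ≤ 0 := by
  rcases max_choice 0 (√(-u₀) + v₀) with h | h <;> rw [h]
  · exact vetoCurve_le_self hu₀ hv₀
  · exact (vetoCurve_sqrt_add hu₀).trans_le hv₀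

end VetoCurve

theorem lagrangian_le_of_slackness {u₀ v₀ θ x p q b : ℝ} (hq : q ∈ Icc (0 : ℝ) 1)
    (hx : (θ - v₀) ^ 2 + u₀ ≤ (x - v₀) ^ 2)
    (hslack : p = 0 ∨ (x - v₀) ^ 2 = (θ - v₀) ^ 2 + u₀) :
    q * u₀ - (1 - q) * (b - θ) ^ 2 - (θ - x) * (2 * (q * v₀ + (1 - q) * b)) ≤
      p * u₀ - (1 - p) * (x - θ) ^ 2 - (θ - x) * (2 * (p * v₀ + (1 - p) * x)) := by
  have hform : ∀ r y : ℝ, r * u₀ - (1 - r) * (y - θ) ^ 2 - (θ - x) * (2 * (r * v₀ + (1 - r) * y))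
      = u₀ - 2 * (θ - x) * v₀ + (1 - r) * ((x - v₀) ^ 2 - (θ - v₀) ^ 2 - u₀ - (y - x) ^ 2) :=
    fun r y => by ring
  rw [hform, hform]
  have hbx := mul_nonneg (sub_nonneg.2 hq.2) (sq_nonneg (b - x))
  rcases hslack with rfl | hD
  · nlinarith [mul_nonneg hq.1 (sub_nonneg.2 hx)]
  · rw [hD]; nlinarith

namespace IsVetoMechanism

variable {μ : Measure ℝ} [IsFiniteMeasure μ] {M : ℝ} {p a : ℝ → ℝ}

theorem integrable_action (hμ : ∀ᵐ θ ∂μ, θ ∈ Icc (0 : ℝ) 1) (h : IsVetoMechanism M p a) :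
    Integrable a μ :=
  .of_mem_Icc (-M) M h.2.1.aemeasurable (hμ.mono h.2.2.2)

theorem integrable_payoff (hμ : ∀ᵐ θ ∂μ, θ ∈ Icc (0 : ℝ) 1) (h : IsVetoMechanism M p a)
    (u₀ : ℝ) : Integrable (fun θ => p θ * u₀ - (1 - p θ) * (a θ - θ) ^ 2) μ := by
  obtain ⟨hpm, ham, hp, ha⟩ := h
  refine .of_bound (by fun_prop) (|u₀| + (M + 1) ^ 2) (hμ.mono fun θ hθ => ?_)
  obtain ⟨⟨hp0, hp1⟩, ⟨haM, hMa⟩, ⟨hθ0, hθ1⟩⟩ := And.intro (hp θ hθ) (And.intro (ha θ hθ) hθ)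
  have hsq : (a θ - θ) ^ 2 ≤ (M + 1) ^ 2 := sq_le_sq' (by linarith) (by linarith)
  rw [Real.norm_eq_abs, abs_le]
  constructor <;> nlinarith [abs_nonneg u₀, le_abs_self u₀, neg_abs_le u₀, sq_nonneg (a θ - θ)]

end IsVetoMechanism

theorem isOptimalVeto_of_slackness {μ : Measure ℝ} [IsFiniteMeasure μ]
    (hμ : ∀ᵐ θ ∂μ, θ ∈ Icc (0 : ℝ) 1) {M v₀ u₀ : ℝ} {p a : ℝ → ℝ}
    (hmech : IsVetoMechanism M p a) (hic : IsICVeto v₀ p a)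
    (hmean : ∫ θ, a θ ∂μ = ∫ θ, θ ∂μ)
    (hslack : ∀ θ ∈ Icc (0 : ℝ) 1, (θ - v₀) ^ 2 + u₀ ≤ (a θ - v₀) ^ 2 ∧
      (p θ = 0 ∨ (a θ - v₀) ^ 2 = (θ - v₀) ^ 2 + u₀)) :
    IsOptimalVeto μ v₀ u₀ M p a := by
  refine ⟨hmech, hic, fun q b hqb hqic => ?_⟩
  obtain ⟨v, hv⟩ := hic
  obtain ⟨w, hw⟩ := hqic
  have hid : Integrable (fun θ : ℝ => θ) μ := continuous_id.integrable_of_ae_mem_Icc hμ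
  have hmult : Integrable (fun θ => θ - a θ) μ := hid.sub (hmech.integrable_action hμ)
  have hmult0 : ∫ θ, (θ - a θ) ∂μ = 0 := by
    rw [integral_sub hid (hmech.integrable_action hμ), hmean, sub_self]
  have hle : ∀ᵐ θ ∂μ, q θ * u₀ - (1 - q θ) * (b θ - θ) ^ 2 - (θ - a θ) * (2 * w) ≤
      p θ * u₀ - (1 - p θ) * (a θ - θ) ^ 2 - (θ - a θ) * (2 * v) := by
    filter_upwards [hμ] with θ hθ
    rw [← hw θ hθ, ← hv θ hθ]
    exact lagrangian_le_of_slackness (hqb.2.2.1 θ hθ) (hslack θ hθ).1 (hslack θ hθ).2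
  have hpayoff : ∀ r c : ℝ → ℝ, IsVetoMechanism M r c → ∀ k : ℝ,
      ∫ θ, (r θ * u₀ - (1 - r θ) * (c θ - θ) ^ 2 - (θ - a θ) * k) ∂μ = vetoPayoff μ u₀ r c :=
    fun r c hrc k => by
      rw [integral_sub (hrc.integrable_payoff hμ u₀) (hmult.mul_const k), integral_mul_const,
        hmult0, zero_mul, sub_zero, vetoPayoff]
  calc vetoPayoff μ u₀ q b = _ := (hpayoff q b hqb (2 * w)).symm
    _ ≤ _ := integral_mono_ae ((hqb.integrable_payoff hμ u₀).sub (hmult.mul_const _))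
        ((hmech.integrable_payoff hμ u₀).sub (hmult.mul_const _)) hle
    _ = vetoPayoff μ u₀ p a := hpayoff p a hmech (2 * v)

section FullSupport

variable {μ : Measure ℝ} [IsProbabilityMeasure μ] {v₀ u₀ : ℝ}

theorem integral_max_vetoCurve_zero_lt (hμ : ∀ᵐ θ ∂μ, θ ∈ Icc (0 : ℝ) 1)
    (hfull : ∀ a b : ℝ, 0 ≤ a → a < b → b ≤ 1 → 0 < μ (Ioo a b)) (hv₀ : v₀ ≤ 0) (hu₀ : u₀ < 0) :
    ∫ θ, max (vetoCurve v₀ u₀ θ) 0 ∂μ < ∫ θ, θ ∂μ :=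
  integral_lt_integral_of_le_of_lt_on
    ((continuous_vetoCurve.integrable_of_ae_mem_Icc hμ).max_const 0)
    (continuous_id.integrable_of_ae_mem_Icc hμ)
    (hμ.mono fun _ hθ => max_le (vetoCurve_le_self hu₀.le (hv₀.trans hθ.1)) hθ.1)
    (hfull 0 1 le_rfl one_pos le_rfl)
    fun _ hθ => max_lt (vetoCurve_lt_self hu₀ (hv₀.trans_lt hθ.1)) hθ.1

theorem strictMonoOn_integral_max_vetoCurve (hμ : ∀ᵐ θ ∂μ, θ ∈ Icc (0 : ℝ) 1)
    (hfull : ∀ a b : ℝ, 0 ≤ a → a < b → b ≤ 1 → 0 < μ (Ioo a b)) (hv₀ : v₀ ≤ 0) (hu₀ : u₀ ≤ 0) :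
    StrictMonoOn (fun a => ∫ θ, max (vetoCurve v₀ u₀ θ) a ∂μ) (Ioi 0) := fun a _ b hb hab => by
  have hint := continuous_vetoCurve.integrable_of_ae_mem_Icc (f := vetoCurve v₀ u₀) hμ
  dsimp only
  refine integral_lt_integral_of_le_of_lt_on (hint.max_const a) (hint.max_const b)
    (ae_of_all _ fun θ => max_le_max_left _ hab.le)
    (hfull 0 (min b 1) le_rfl (lt_min hb one_pos) (min_le_right b 1)) fun θ hθ => ?_
  have hηθ : vetoCurve v₀ u₀ θ < b :=
    (vetoCurve_le_self hu₀ (hv₀.trans hθ.1.le)).trans_lt (hθ.2.trans_le (min_le_left b 1))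
  exact lt_max_of_lt_right (max_lt hηθ hab)

theorem exists_integral_max_vetoCurve_eq (hμ : ∀ᵐ θ ∂μ, θ ∈ Icc (0 : ℝ) 1)
    (hfull : ∀ a b : ℝ, 0 ≤ a → a < b → b ≤ 1 → 0 < μ (Ioo a b)) (hv₀ : v₀ ≤ 0) (hu₀ : u₀ < 0)
    (hval : (∫ θ, θ ∂μ - v₀) ^ 2 < (1 - v₀) ^ 2 + u₀) :
    ∃ a ∈ Ioo 0 (vetoCurve v₀ u₀ 1), ∫ θ, max (vetoCurve v₀ u₀ θ) a ∂μ = ∫ θ, θ ∂μ := by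
  have hint := continuous_vetoCurve.integrable_of_ae_mem_Icc (f := vetoCurve v₀ u₀) hμ
  have hE0 : 0 ≤ ∫ θ, θ ∂μ := integral_nonneg_of_ae (hμ.mono fun _ hθ => hθ.1)
  have hE : ∫ θ, θ ∂μ < vetoCurve v₀ u₀ 1 := by
    have := (Real.lt_sqrt (by linarith)).2 hval
    unfold vetoCurve; linarith
  exact intermediate_value_Ioo (hE0.trans hE.le)
    (lipschitzWith_integral_max hint).continuous.continuousOn
    ⟨integral_max_vetoCurve_zero_lt hμ hfull hv₀ hu₀, hE.trans_le (le_integral_max hint _)⟩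

end FullSupport

theorem exists_vetoCurve_eq_of_mem_Ioo {v₀ u₀ a : ℝ} (hv₀ : v₀ ≤ 0) (hu₀ : u₀ ≤ 0)
    (ha : a ∈ Ioo 0 (vetoCurve v₀ u₀ 1)) :
    ∃ t ∈ Ioo (max 0 (√(-u₀) + v₀)) 1, vetoCurve v₀ u₀ t = a := by
  have hs := vetoCurve_max_nonpos hv₀ hu₀
  have hs1 : max 0 (√(-u₀) + v₀) < 1 := lt_of_not_ge fun h => by
    have := monotoneOn_vetoCurve (u₀ := u₀) (hv₀.trans zero_le_one)
      (hv₀.trans (le_max_left 0 (√(-u₀) + v₀))) h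
    linarith [ha.1, ha.2]
  exact intermediate_value_Ioo hs1.le continuous_vetoCurve.continuousOn ⟨hs.trans_lt ha.1, ha.2⟩

section Threshold

variable {v₀ u₀ t : ℝ}

theorem isVetoMechanism_threshold {M : ℝ} (hM : 1 ≤ M) (hv₀ : v₀ ≤ 0) (hu₀ : u₀ ≤ 0)
    (ht : t ∈ Icc (0 : ℝ) 1) (hpos : 0 < vetoCurve v₀ u₀ t) :
    IsVetoMechanism M
      (fun θ => if θ < t then 0 else
        (vetoCurve v₀ u₀ θ - vetoCurve v₀ u₀ t) / (vetoCurve v₀ u₀ θ - v₀))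
      (fun θ => if θ < t then vetoCurve v₀ u₀ t else vetoCurve v₀ u₀ θ) := by
  have hle1 : ∀ θ ∈ Icc (0 : ℝ) 1, vetoCurve v₀ u₀ θ ≤ 1 := fun θ hθ =>
    (vetoCurve_le_self hu₀ (hv₀.trans hθ.1)).trans hθ.2
  have hmono : ∀ θ ∈ Icc (0 : ℝ) 1, ¬θ < t → vetoCurve v₀ u₀ t ≤ vetoCurve v₀ u₀ θ :=
    fun θ hθ h => monotoneOn_vetoCurve (hv₀.trans ht.1) (hv₀.trans hθ.1) (not_lt.1 h)
  have hmeas : MeasurableSet {θ : ℝ | θ < t} := measurableSet_lt measurable_id measurable_const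
  have hηm : Measurable (vetoCurve v₀ u₀) := continuous_vetoCurve.measurable
  refine ⟨Measurable.ite hmeas measurable_const (by fun_prop),
    Measurable.ite hmeas measurable_const hηm, fun θ hθ => ?_, fun θ hθ => ?_⟩ <;>
    dsimp only <;> split_ifs with h
  · exact ⟨le_rfl, zero_le_one⟩
  · have hden : 0 < vetoCurve v₀ u₀ θ - v₀ := by linarith [hmono θ hθ h]
    exact ⟨div_nonneg (by linarith [hmono θ hθ h]) hden.le, (div_le_one hden).2 (by linarith)⟩
  · exact ⟨by linarith, by linarith [hle1 t ht]⟩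
  · exact ⟨by linarith [hmono θ hθ h], by linarith [hle1 θ hθ]⟩

theorem isICVeto_threshold (hv₀ : v₀ ≤ 0) (ht : 0 ≤ t) (hpos : 0 < vetoCurve v₀ u₀ t) :
    IsICVeto v₀
      (fun θ => if θ < t then 0 else
        (vetoCurve v₀ u₀ θ - vetoCurve v₀ u₀ t) / (vetoCurve v₀ u₀ θ - v₀))
      (fun θ => if θ < t then vetoCurve v₀ u₀ t else vetoCurve v₀ u₀ θ) := by
  refine ⟨vetoCurve v₀ u₀ t, fun θ hθ => ?_⟩
  dsimp only
  split_ifs with h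
  · ring
  · have hmono := monotoneOn_vetoCurve (u₀ := u₀) (hv₀.trans ht) (hv₀.trans hθ.1) (not_lt.1 h)
    have hden : vetoCurve v₀ u₀ θ - v₀ ≠ 0 := by linarith
    field_simp
    ring

theorem isOptimalVeto_threshold {μ : Measure ℝ} [IsProbabilityMeasure μ]
    (hμ : ∀ᵐ θ ∂μ, θ ∈ Icc (0 : ℝ) 1) {M : ℝ} (hM : 1 ≤ M) (hv₀ : v₀ ≤ 0) (hu₀ : u₀ ≤ 0)
    (ht : t ∈ Icc (max 0 (√(-u₀) + v₀)) 1) (hpos : 0 < vetoCurve v₀ u₀ t)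
    (hmean : ∫ θ, max (vetoCurve v₀ u₀ θ) (vetoCurve v₀ u₀ t) ∂μ = ∫ θ, θ ∂μ) :
    IsOptimalVeto μ v₀ u₀ M
      (fun θ => if θ < t then 0 else
        (vetoCurve v₀ u₀ θ - vetoCurve v₀ u₀ t) / (vetoCurve v₀ u₀ θ - v₀))
      (fun θ => if θ < t then vetoCurve v₀ u₀ t else vetoCurve v₀ u₀ θ) := by
  have ht₀ : t ∈ Icc (0 : ℝ) 1 := ⟨(le_max_left _ _).trans ht.1, ht.2⟩
  have hroot : √(-u₀) + v₀ ≤ t := (le_max_right _ _).trans ht.1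
  have hmono : MonotoneOn (vetoCurve v₀ u₀) (Icc 0 1) :=
    monotoneOn_vetoCurve.mono fun θ hθ => hv₀.trans hθ.1
  refine isOptimalVeto_of_slackness hμ (isVetoMechanism_threshold hM hv₀ hu₀ ht₀ hpos)
    (isICVeto_threshold hv₀ ht₀.1 hpos) ?_ fun θ hθ => ?_
  · rw [← hmean]
    exact integral_congr_ae (hμ.mono fun θ hθ => (max_eq_ite_of_monotoneOn hmono ht₀ hθ).symm)
  · split_ifs with h
    · rw [sq_vetoCurve_sub hu₀ hroot]
      have : (θ - v₀) ^ 2 ≤ (t - v₀) ^ 2 :=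
        pow_le_pow_left₀ (by linarith [hθ.1]) (sub_le_sub_right h.le v₀) 2
      exact ⟨by linarith, Or.inl rfl⟩
    · have hsq := sq_vetoCurve_sub hu₀ (hroot.trans (not_lt.1 h))
      exact ⟨hsq.ge, Or.inr hsq⟩

end Threshold

/-- **Characterization of the optimal veto mechanism (valuable case, `v₀ ≤ 0`).**
If `v₀ ≤ 0`, `u₀ < 0` and `(1 − v₀)² + u₀ > (E_μ[θ] − v₀)²`, then there is a unique
`ā ∈ (0, η(1))` satisfying the first-order condition
`∫_{θ̄}¹ (η(θ) − ā) dμ + ā − E_μ[θ] = 0` with `θ̄ ∈ [s, 1]` the unique point where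
`η(θ̄) = ā`; moreover `ā ∈ (0, E_μ[θ])`, and the veto mechanism that pools at `ā` with no
veto below `θ̄` and proposes `η(θ)` with veto probability `(η(θ) − ā)/(η(θ) − v₀)` above
`θ̄` is optimal. -/
theorem optimal_veto_characterization
    (μ : Measure ℝ) [IsProbabilityMeasure μ]
    (hsupp : μ (Icc (0 : ℝ) 1) = 1)
    (hfull : ∀ a b : ℝ, 0 ≤ a → a < b → b ≤ 1 → 0 < μ (Ioo a b))
    (M v₀ u₀ : ℝ) (hM : 1 < M) (hv₀ : v₀ ≤ 0) (hu₀ : u₀ < 0)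
    (Eμ : ℝ) (hEμ : Eμ = ∫ θ, θ ∂μ)
    (hval : (Eμ - v₀) ^ 2 < (1 - v₀) ^ 2 + u₀)
    (η : ℝ → ℝ) (hη : ∀ θ, η θ = Real.sqrt ((θ - v₀) ^ 2 + u₀) + v₀)
    (s : ℝ) (hs : s = max 0 (Real.sqrt (-u₀) + v₀)) :
    ∃ abar θbar : ℝ,
      θbar ∈ Icc s 1 ∧ η θbar = abar ∧
      (∫ θ in Icc θbar 1, (η θ - abar) ∂μ) + abar - Eμ = 0 ∧
      abar ∈ Ioo 0 (η 1) ∧ abar ∈ Ioo 0 Eμ ∧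
      (∀ a' θ' : ℝ, a' ∈ Ioo 0 (η 1) → θ' ∈ Icc s 1 → η θ' = a' →
        (∫ θ in Icc θ' 1, (η θ - a') ∂μ) + a' - Eμ = 0 → a' = abar ∧ θ' = θbar) ∧
      IsOptimalVeto μ v₀ u₀ M
        (fun θ => if θ < θbar then 0 else (η θ - abar) / (η θ - v₀))
        (fun θ => if θ < θbar then abar else η θ) := by
  obtain rfl : η = vetoCurve v₀ u₀ := funext hη
  subst hEμ hs
  have hμ : ∀ᵐ θ ∂μ, θ ∈ Icc (0 : ℝ) 1 :=
    mem_ae_iff.2 ((prob_compl_eq_zero_iff measurableSet_Icc).2 hsupp)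
  have hint : Integrable (vetoCurve v₀ u₀) μ := continuous_vetoCurve.integrable_of_ae_mem_Icc hμ
  have hstrict : StrictMonoOn (vetoCurve v₀ u₀) (Icc (max 0 (√(-u₀) + v₀)) 1) :=
    (strictMonoOn_vetoCurve hu₀.le).mono fun θ hθ => (le_max_right _ _).trans hθ.1
  have hmono : MonotoneOn (vetoCurve v₀ u₀) (Icc 0 1) :=
    monotoneOn_vetoCurve.mono fun θ hθ => hv₀.trans hθ.1
  have hfoc : ∀ t ∈ Icc (max 0 (√(-u₀) + v₀)) 1,
      (∫ θ in Icc t 1, (vetoCurve v₀ u₀ θ - vetoCurve v₀ u₀ t) ∂μ) + vetoCurve v₀ u₀ t =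
        ∫ θ, max (vetoCurve v₀ u₀ θ) (vetoCurve v₀ u₀ t) ∂μ := fun t ht =>
    (integral_max_eq_setIntegral_add hμ hint hmono ⟨(le_max_left _ _).trans ht.1, ht.2⟩).symm
  obtain ⟨abar, habar, hΦ⟩ := exists_integral_max_vetoCurve_eq hμ hfull hv₀ hu₀ hval
  obtain ⟨θbar, hθbar, rfl⟩ := exists_vetoCurve_eq_of_mem_Ioo hv₀ hu₀.le habar
  have hθbar' : θbar ∈ Icc (max 0 (√(-u₀) + v₀)) 1 := Ioo_subset_Icc_self hθbar
  refine ⟨_, θbar, hθbar', rfl, by rw [hfoc θbar hθbar', hΦ, sub_self], habar, ⟨habar.1, ?_⟩,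
    ?_, isOptimalVeto_threshold hμ hM.le hv₀ hu₀.le hθbar' habar.1 hΦ⟩
  · exact hΦ ▸ lt_integral_max hint
      (hfull θbar 1 ((le_max_left _ _).trans hθbar.1.le) hθbar.2 le_rfl)
      fun θ hθ => hstrict hθbar' ⟨hθbar.1.le.trans hθ.1.le, hθ.2.le⟩ hθ.1
  · rintro a' θ' ha' hθ' rfl hfoc'
    have heq : vetoCurve v₀ u₀ θ' = vetoCurve v₀ u₀ θbar :=
      (strictMonoOn_integral_max_vetoCurve hμ hfull hv₀ hu₀.le).injOn ha'.1 habar.1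
        (by linarith [hfoc θ' hθ'])
    exact ⟨heq, hstrict.injOn hθ' hθbar' heq⟩
end

section
/- Assume v₀ ≤ 0, u₀ < 0 and (1 − v₀)² + u₀ ≤ (E_μ[θ] − v₀)². Then the constant veto mechanism defined by ã*(θ) = E_μ[θ] and p̃*(θ) = 0 for all θ ∈ [0,1] is optimal; that is, the principal chooses E_μ[θ] regardless of the state and never uses veto. -/
open MeasureTheory Set

lemma key_ineq (q b θ v₀ u₀ Eμ : ℝ) (hq0 : 0 ≤ q) (hq1 : q ≤ 1)
    (hθ0 : 0 ≤ θ) (hθ1 : θ ≤ 1) (hv : v₀ ≤ 0)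
    (hval : (1 - v₀) ^ 2 + u₀ ≤ (Eμ - v₀) ^ 2) :
    q * u₀ - (1 - q) * (b - θ) ^ 2 ≤
      -(Eμ - θ) ^ 2 + 2 * ((q * v₀ + (1 - q) * b) - Eμ) * (θ - Eμ) := by
  nlinarith [mul_nonneg (sub_nonneg.2 hq1) (sq_nonneg (b - Eμ)),
    mul_nonneg hq0 (sub_nonneg.2 hval),
    mul_nonneg hq0 (mul_nonneg (sub_nonneg.2 hθ1) (by nlinarith : (0:ℝ) ≤ 1 + θ - 2 * v₀)),
    mul_nonneg (mul_nonneg hq0 (sub_nonneg.2 hq1)) (sq_nonneg (v₀ - b))]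

lemma integrable_of_bdd (μ : Measure ℝ) [IsProbabilityMeasure μ]
    (hsupp : μ (Icc (0 : ℝ) 1) = 1) (f : ℝ → ℝ) (hf : Measurable f)
    (C : ℝ) (hC : ∀ θ ∈ Icc (0 : ℝ) 1, |f θ| ≤ C) : Integrable f μ := by
  have hae : ∀ᵐ θ ∂μ, θ ∈ Icc (0 : ℝ) 1 := by
    have h0 : μ (Icc (0 : ℝ) 1)ᶜ = 0 := by
      rw [measure_compl measurableSet_Icc (measure_ne_top μ _), hsupp, measure_univ,
        tsub_self]
    exact mem_ae_iff.2 h0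
  exact (integrable_const C).mono' hf.aestronglyMeasurable
    (hae.mono fun θ hθ => by simpa using hC θ hθ)

/-- **Characterization of the optimal veto mechanism (trivial case, `v₀ ≤ 0`).**
If `v₀ ≤ 0`, `u₀ < 0` and `(1 − v₀)² + u₀ ≤ (E_μ[θ] − v₀)²`, then the constant mechanism
choosing `E_μ[θ]` at every state with no veto is an optimal veto mechanism. -/
theorem optimal_veto_trivial
    (μ : Measure ℝ) [IsProbabilityMeasure μ]
    (hsupp : μ (Icc (0 : ℝ) 1) = 1)
    (hfull : ∀ a b : ℝ, 0 ≤ a → a < b → b ≤ 1 → 0 < μ (Ioo a b))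
    (M v₀ u₀ : ℝ) (hM : 1 < M) (hv₀ : v₀ ≤ 0) (hu₀ : u₀ < 0)
    (Eμ : ℝ) (hEμ : Eμ = ∫ θ, θ ∂μ)
    (hval : (1 - v₀) ^ 2 + u₀ ≤ (Eμ - v₀) ^ 2) :
    IsOptimalVeto μ v₀ u₀ M (fun _ => 0) (fun _ => Eμ) := by
  have hae : ∀ᵐ θ ∂μ, θ ∈ Icc (0 : ℝ) 1 := by
    have h0 : μ (Icc (0 : ℝ) 1)ᶜ = 0 := by
      rw [measure_compl measurableSet_Icc (measure_ne_top μ _), hsupp, measure_univ,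
        tsub_self]
    exact mem_ae_iff.2 h0
  -- integrability of the identity
  have hid : Integrable (fun θ : ℝ => θ) μ :=
    integrable_of_bdd μ hsupp _ measurable_id 1 (fun θ hθ => by
      rw [abs_le]; exact ⟨by linarith [hθ.1], hθ.2⟩)
  -- bounds on Eμ
  have hEμ0 : 0 ≤ Eμ := by
    rw [hEμ]; exact integral_nonneg_of_ae (hae.mono fun θ hθ => hθ.1)
  have hEμ1 : Eμ ≤ 1 := by
    rw [hEμ]
    calc ∫ θ, θ ∂μ ≤ ∫ _, (1:ℝ) ∂μ :=
          integral_mono_ae hid (integrable_const 1) (hae.mono fun θ hθ => hθ.2)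
      _ = 1 := by simp
  have hsq : Integrable (fun θ : ℝ => -(Eμ - θ) ^ 2) μ :=
    integrable_of_bdd μ hsupp _ (by fun_prop) 4 (fun θ hθ => by
      rw [abs_le]; constructor <;> nlinarith [hθ.1, hθ.2])
  refine ⟨⟨measurable_const, measurable_const,
      fun θ _ => ⟨le_refl 0, zero_le_one⟩,
      fun θ _ => ⟨by linarith, by linarith⟩⟩,
    ⟨Eμ, fun θ _ => by ring⟩, ?_⟩
  intro q b ⟨hqm, hbm, hq01, hbM⟩ ⟨vhat, hIC⟩
  -- the integrand of the competitor
  set g : ℝ → ℝ := fun θ => q θ * u₀ - (1 - q θ) * (b θ - θ) ^ 2 with hg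
  set h : ℝ → ℝ := fun θ => -(Eμ - θ) ^ 2 + 2 * (vhat - Eμ) * (θ - Eμ) with hh
  have hgint : Integrable g μ := by
    refine integrable_of_bdd μ hsupp g (by fun_prop) (|u₀| + (M + 1) ^ 2) ?_
    intro θ hθ
    obtain ⟨hq0, hq1⟩ := hq01 θ hθ
    obtain ⟨hb0, hb1⟩ := hbM θ hθ
    have h1 : (b θ - θ) ^ 2 ≤ (M + 1) ^ 2 := by nlinarith [hθ.1, hθ.2]
    have h2 : |q θ * u₀| ≤ |u₀| := by
      rw [abs_mul, abs_of_nonneg hq0]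
      nlinarith [abs_nonneg u₀]
    rw [abs_le]; constructor
    · have : (1 - q θ) * (b θ - θ) ^ 2 ≤ (M + 1) ^ 2 := by
        nlinarith [sq_nonneg (b θ - θ)]
      have := (abs_le.1 h2).1
      simp only [hg]; nlinarith
    · have : (0:ℝ) ≤ (1 - q θ) * (b θ - θ) ^ 2 :=
        mul_nonneg (by linarith) (sq_nonneg _)
      have := (abs_le.1 h2).2
      simp only [hg]; nlinarith [sq_nonneg (M + 1)]
  have hhint : Integrable h μ := by
    refine (hsq.add ?_)
    exact ((hid.sub (integrable_const Eμ)).const_mul _)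
  have hle : vetoPayoff μ u₀ q b ≤ ∫ θ, h θ ∂μ := by
    refine integral_mono_ae hgint hhint (hae.mono fun θ hθ => ?_)
    have hIC' := hIC θ hθ
    have := key_ineq (q θ) (b θ) θ v₀ u₀ Eμ (hq01 θ hθ).1 (hq01 θ hθ).2
      hθ.1 hθ.2 hv₀ hval
    rw [hIC'] at this
    simpa [hg, hh] using this
  have hint : ∫ θ, h θ ∂μ = vetoPayoff μ u₀ (fun _ => 0) (fun _ => Eμ) := by
    have e1 : ∫ θ, h θ ∂μ =
        (∫ θ, -(Eμ - θ) ^ 2 ∂μ) + ∫ θ, 2 * (vhat - Eμ) * (θ - Eμ) ∂μ :=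
      integral_add hsq (((hid.sub (integrable_const Eμ)).const_mul _))
    have e2 : ∫ θ, 2 * (vhat - Eμ) * (θ - Eμ) ∂μ = 0 := by
      rw [integral_const_mul, integral_sub hid (integrable_const Eμ)]
      simp [← hEμ]
    have e3 : vetoPayoff μ u₀ (fun _ => 0) (fun _ => Eμ) = ∫ θ, -(Eμ - θ) ^ 2 ∂μ := by
      unfold vetoPayoff; congr 1; funext θ; ring
    rw [e1, e2, e3]; ring
  calc vetoPayoff μ u₀ q b ≤ ∫ θ, h θ ∂μ := hle
    _ = _ := hint
end

section
/- Assume v₀ ≤ 0, u₀ < 0 and (1 − v₀)² + u₀ > (E_μ[θ] − v₀)². Extend η to all of [0,1] by setting η(θ) = v₀ for θ < s, and define F(v̂) = ∫₀¹ max{η(θ) − v̂, 0} dμ(θ) + v̂ − E_μ[θ] for v̂ ∈ [0, η(1)]. Then F is continuous and strictly increasing on [0, η(1)], F(0) < 0, and F(E_μ[θ]) > 0; consequently F has a unique zero ā in [0, η(1)], and ā ∈ (0, E_μ[θ]). -/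
open MeasureTheory Set

/-- **The first-order condition has a unique solution.** Assume `v₀ ≤ 0`, `u₀ < 0` and
`(1 − v₀)² + u₀ > (E_μ[θ] − v₀)²`. Extend `η` by `η(θ) = v₀` for `θ < s`, and define
`F(v̂) = ∫₀¹ max{η(θ) − v̂, 0} dμ + v̂ − E_μ[θ]`. Then `F` is continuous and strictly
increasing on `[0, η(1)]`, `F(0) < 0` and `F(E_μ[θ]) > 0`; hence `F` has a unique zero
`ā` in `[0, η(1)]`, and `ā ∈ (0, E_μ[θ])`. -/
theorem foc_unique_zero
    (μ : Measure ℝ) [IsProbabilityMeasure μ]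
    (hsupp : μ (Icc (0 : ℝ) 1) = 1)
    (hfull : ∀ a b : ℝ, 0 ≤ a → a < b → b ≤ 1 → 0 < μ (Ioo a b))
    (v₀ u₀ : ℝ) (hv₀ : v₀ ≤ 0) (hu₀ : u₀ < 0)
    (Eμ : ℝ) (hEμ : Eμ = ∫ θ, θ ∂μ)
    (hval : (Eμ - v₀) ^ 2 < (1 - v₀) ^ 2 + u₀)
    (s : ℝ) (hs : s = max 0 (Real.sqrt (-u₀) + v₀))
    (η : ℝ → ℝ)
    (hη : ∀ θ, η θ = if θ < s then v₀ else Real.sqrt ((θ - v₀) ^ 2 + u₀) + v₀)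
    (F : ℝ → ℝ)
    (hF : ∀ vhat, F vhat = (∫ θ in Icc (0 : ℝ) 1, max (η θ - vhat) 0 ∂μ) + vhat - Eμ) :
    ContinuousOn F (Icc 0 (η 1)) ∧ StrictMonoOn F (Icc 0 (η 1)) ∧
      F 0 < 0 ∧ 0 < F Eμ ∧
      (∃! abar : ℝ, abar ∈ Icc 0 (η 1) ∧ F abar = 0) ∧
      (∀ abar : ℝ, abar ∈ Icc 0 (η 1) → F abar = 0 → abar ∈ Ioo 0 Eμ) := by
  have hpos : (0:ℝ) < (1 - v₀) ^ 2 + u₀ := lt_of_le_of_lt (sq_nonneg _) hval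
  have hs0 : 0 ≤ s := hs ▸ le_max_left 0 _
  have hs1 : s < 1 := by
    rw [hs, max_lt_iff]
    refine ⟨one_pos, ?_⟩
    have h1 : Real.sqrt (-u₀) < 1 - v₀ := by
      rw [Real.sqrt_lt' (by linarith)]
      linarith
    linarith
  have hηmono : Monotone η := by
    intro a b hab
    rw [hη a, hη b]
    by_cases hbs : b < s
    · simp [show a < s from lt_of_le_of_lt hab hbs, hbs]
    · rw [if_neg hbs]
      by_cases has : a < s
      · rw [if_pos has]
        have := Real.sqrt_nonneg ((b - v₀) ^ 2 + u₀)
        linarith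
      · rw [if_neg has]
        push_neg at has
        have ha0 : 0 ≤ a - v₀ := by linarith [le_trans hs0 has]
        have hsq : (a - v₀) ^ 2 ≤ (b - v₀) ^ 2 := by nlinarith
        have := Real.sqrt_le_sqrt (show (a - v₀) ^ 2 + u₀ ≤ (b - v₀) ^ 2 + u₀ by linarith)
        linarith
  have hηle : ∀ θ : ℝ, 0 ≤ θ → η θ ≤ θ := by
    intro θ hθ
    rw [hη]
    split_ifs with h
    · linarith
    · have h1 : Real.sqrt ((θ - v₀) ^ 2 + u₀) ≤ θ - v₀ := by
        calc Real.sqrt ((θ - v₀) ^ 2 + u₀) ≤ Real.sqrt ((θ - v₀) ^ 2) :=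
              Real.sqrt_le_sqrt (by linarith)
          _ = θ - v₀ := Real.sqrt_sq (by linarith)
      linarith
  have hηlt : ∀ θ : ℝ, 0 < θ → η θ < θ := by
    intro θ hθ
    rw [hη]
    split_ifs with h
    · linarith
    · have h1 : Real.sqrt ((θ - v₀) ^ 2 + u₀) < θ - v₀ := by
        rw [Real.sqrt_lt' (by linarith)]
        linarith
      linarith
  have hmeas : Measurable η := hηmono.measurable
  have hae : ∀ᵐ θ ∂μ, θ ∈ Icc (0:ℝ) 1 := by
    have h0 : μ (Icc (0:ℝ) 1)ᶜ = 0 := (prob_compl_eq_zero_iff measurableSet_Icc).mpr hsupp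
    exact ae_iff.mpr h0
  have hres : μ.restrict (Icc (0:ℝ) 1) = μ := Measure.restrict_eq_self_of_ae_mem hae
  have hF' : ∀ v, F v = (∫ θ, max (η θ - v) 0 ∂μ) + v - Eμ := by
    intro v
    rw [hF v, hres]
  have hint : ∀ v : ℝ, Integrable (fun θ => max (η θ - v) 0) μ := by
    intro v
    refine Integrable.mono' (integrable_const (max (η 1 - v) 0))
      ((hmeas.sub measurable_const).max measurable_const).aestronglyMeasurable ?_
    filter_upwards [hae] with θ hθ
    rw [Real.norm_eq_abs, abs_of_nonneg (le_max_right _ _)]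
    exact max_le_max (by have := hηmono hθ.2; linarith) le_rfl
  have hid_int : Integrable (fun θ : ℝ => θ) μ := by
    refine Integrable.mono' (integrable_const 1) measurable_id.aestronglyMeasurable ?_
    filter_upwards [hae] with θ hθ
    rw [Real.norm_eq_abs, abs_of_nonneg hθ.1]
    exact hθ.2
  have hEμ0 : 0 ≤ Eμ := by
    rw [hEμ]
    apply integral_nonneg_of_ae
    filter_upwards [hae] with θ hθ using hθ.1
  have hη1 : η 1 = Real.sqrt ((1 - v₀) ^ 2 + u₀) + v₀ := by
    rw [hη, if_neg (not_lt.mpr hs1.le)]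
  have hEμlt : Eμ < η 1 := by
    rw [hη1]
    have : Eμ - v₀ < Real.sqrt ((1 - v₀) ^ 2 + u₀) := (Real.lt_sqrt (by linarith)).mpr hval
    linarith
  have hη1pos : 0 < η 1 := lt_of_le_of_lt hEμ0 hEμlt
  -- strict monotonicity
  have hmono : StrictMonoOn F (Icc 0 (η 1)) := by
    intro a ha b hb hab
    have ha0 : 0 ≤ a := ha.1
    have hb0 : 0 < b := lt_of_le_of_lt ha0 hab
    set g : ℝ → ℝ := fun θ => ((b - a) - max (η θ - a) 0) + max (η θ - b) 0 with hg
    have hgnn : ∀ θ, 0 ≤ g θ := by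
      intro θ
      simp only [hg]
      have h1 : max (η θ - a) 0 ≤ max (η θ - b) 0 + (b - a) := by
        apply max_le
        · have := le_max_left (η θ - b) 0; linarith
        · have := le_max_right (η θ - b) 0; linarith
      linarith
    have hgint : Integrable g μ := by
      exact ((integrable_const (b - a)).sub (hint a)).add (hint b)
    have hposint : 0 < ∫ θ, g θ ∂μ := by
      rw [integral_pos_iff_support_of_nonneg_ae (Filter.Eventually.of_forall hgnn) hgint]
      refine lt_of_lt_of_le (hfull 0 (min b 1) le_rfl (lt_min hb0 one_pos) (min_le_right _ _))
        (measure_mono ?_)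
      intro θ hθ
      have hθb : θ < b := lt_of_lt_of_le hθ.2 (min_le_left _ _)
      have hle : η θ ≤ θ := hηle θ hθ.1.le
      have h2 : max (η θ - a) 0 < b - a := max_lt (by linarith) (by linarith)
      have h3 : max (η θ - b) 0 = 0 := max_eq_right (by linarith)
      have hgpos : 0 < g θ := by
        simp only [hg]
        rw [h3]
        linarith
      exact hgpos.ne'
    have hia : Integrable (fun θ => (b - a) - max (η θ - a) 0) μ := by
      exact (integrable_const (b - a)).sub (hint a)
    have h1 : ∫ θ, (((b - a) - max (η θ - a) 0) + max (η θ - b) 0) ∂μ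
        = (∫ θ, ((b - a) - max (η θ - a) 0) ∂μ) + ∫ θ, max (η θ - b) 0 ∂μ :=
      integral_add hia (hint b)
    have h2 : ∫ θ, ((b - a) - max (η θ - a) 0) ∂μ
        = (∫ _ : ℝ, (b - a) ∂μ) - ∫ θ, max (η θ - a) 0 ∂μ :=
      integral_sub (integrable_const (b - a)) (hint a)
    have h3 : ∫ _ : ℝ, (b - a) ∂μ = b - a := by simp
    have hgg : ∫ θ, g θ ∂μ = ∫ θ, (((b - a) - max (η θ - a) 0) + max (η θ - b) 0) ∂μ := rfl
    rw [hF' a, hF' b]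
    rw [hgg, h1, h2, h3] at hposint
    linarith
  -- continuity
  have hkey : ∀ a b : ℝ, |(∫ θ, max (η θ - a) 0 ∂μ) - ∫ θ, max (η θ - b) 0 ∂μ| ≤ |a - b| := by
    intro a b
    rw [← integral_sub (hint a) (hint b)]
    calc |∫ θ, (max (η θ - a) 0 - max (η θ - b) 0) ∂μ|
        ≤ ∫ θ, |max (η θ - a) 0 - max (η θ - b) 0| ∂μ := by
          simpa [Real.norm_eq_abs] using
            norm_integral_le_integral_norm (fun θ => max (η θ - a) 0 - max (η θ - b) 0)
      _ ≤ ∫ _, |a - b| ∂μ := by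
          apply integral_mono ((hint a).sub (hint b)).abs (integrable_const _)
          intro θ
          have h1 := abs_max_sub_max_le_abs (η θ - a) (η θ - b) 0
          have h2 : (η θ - a) - (η θ - b) = -(a - b) := by ring
          rw [h2, abs_neg] at h1
          exact h1
      _ = |a - b| := by simp
  have hcont : ContinuousOn F (Icc 0 (η 1)) := by
    have hlip : LipschitzWith 2 F := by
      apply LipschitzWith.of_dist_le_mul
      intro a b
      rw [Real.dist_eq, Real.dist_eq, hF' a, hF' b]
      have expand : (∫ θ, max (η θ - a) 0 ∂μ) + a - Eμ - ((∫ θ, max (η θ - b) 0 ∂μ) + b - Eμ)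
          = ((∫ θ, max (η θ - a) 0 ∂μ) - ∫ θ, max (η θ - b) 0 ∂μ) + (a - b) := by ring
      rw [expand]
      have h1 := abs_add_le ((∫ θ, max (η θ - a) 0 ∂μ) - ∫ θ, max (η θ - b) 0 ∂μ) (a - b)
      have h2 := hkey a b
      push_cast
      linarith
    exact hlip.continuous.continuousOn
  -- F 0 < 0
  have hF0 : F 0 < 0 := by
    have hdint : Integrable (fun θ => θ - max (η θ - 0) 0) μ := by
      exact hid_int.sub (hint 0)
    have hnn : 0 ≤ᵐ[μ] fun θ => θ - max (η θ - 0) 0 := by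
      filter_upwards [hae] with θ hθ
      have h1 : η θ ≤ θ := hηle θ hθ.1
      have h2 : max (η θ - 0) 0 ≤ θ := max_le (by linarith) hθ.1
      simp only [Pi.zero_apply]
      linarith
    have key : 0 < ∫ θ, (θ - max (η θ - 0) 0) ∂μ := by
      rw [integral_pos_iff_support_of_nonneg_ae hnn hdint]
      refine lt_of_lt_of_le (hfull 0 1 le_rfl one_pos le_rfl) (measure_mono ?_)
      intro θ hθ
      have h1 : η θ < θ := hηlt θ hθ.1
      have h2 : max (η θ - 0) 0 < θ := max_lt (by linarith) hθ.1
      have h3 : 0 < θ - max (η θ - 0) 0 := by linarith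
      exact h3.ne'
    have hsub : ∫ θ, (θ - max (η θ - 0) 0) ∂μ
        = (∫ θ, θ ∂μ) - ∫ θ, max (η θ - 0) 0 ∂μ := integral_sub hid_int (hint 0)
    rw [hsub, ← hEμ] at key
    rw [hF' 0]
    linarith
  -- F Eμ > 0
  have hFE : 0 < F Eμ := by
    set c := Real.sqrt ((Eμ - v₀) ^ 2 - u₀) with hc
    have hc0 : 0 ≤ c := Real.sqrt_nonneg _
    have hcsq : c ^ 2 = (Eμ - v₀) ^ 2 - u₀ := Real.sq_sqrt (by nlinarith [sq_nonneg (Eμ - v₀)])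
    have hclt : c + v₀ < 1 := by
      have : c < 1 - v₀ := by
        rw [hc, Real.sqrt_lt' (by linarith)]
        linarith
      linarith
    set t := max s (max 0 (c + v₀)) with ht
    have ht0 : 0 ≤ t := le_trans (le_max_left 0 _) (le_max_right s _)
    have ht1 : t < 1 := by
      rw [ht]
      exact max_lt hs1 (max_lt one_pos hclt)
    have key : 0 < ∫ θ, max (η θ - Eμ) 0 ∂μ := by
      have hnn : 0 ≤ᵐ[μ] fun θ => max (η θ - Eμ) 0 :=
        Filter.Eventually.of_forall fun θ => le_max_right _ _
      rw [integral_pos_iff_support_of_nonneg_ae hnn (hint Eμ)]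
      refine lt_of_lt_of_le (hfull t 1 ht0 ht1 le_rfl) (measure_mono ?_)
      intro θ hθ
      have hθs : ¬ θ < s := not_lt.mpr (le_trans (le_max_left s _) hθ.1.le)
      have hθc : c < θ - v₀ := by
        have h1 : c + v₀ ≤ t := le_trans (le_max_right 0 _) (le_max_right s _)
        linarith [hθ.1]
      have hsqgt : c ^ 2 < (θ - v₀) ^ 2 := by nlinarith
      have hsq : (Eμ - v₀) ^ 2 < (θ - v₀) ^ 2 + u₀ := by linarith [hcsq, hsqgt]
      have hηθ : Eμ < η θ := by
        rw [hη θ, if_neg hθs]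
        have : Eμ - v₀ < Real.sqrt ((θ - v₀) ^ 2 + u₀) := (Real.lt_sqrt (by linarith)).mpr hsq
        linarith
      have : 0 < max (η θ - Eμ) 0 := lt_max_iff.mpr (Or.inl (by linarith))
      exact this.ne'
    rw [hF' Eμ]
    linarith
  have hEμmem : Eμ ∈ Icc (0:ℝ) (η 1) := ⟨hEμ0, hEμlt.le⟩
  have hη1mem : η 1 ∈ Icc (0:ℝ) (η 1) := ⟨hη1pos.le, le_rfl⟩
  have h0mem : (0:ℝ) ∈ Icc (0:ℝ) (η 1) := ⟨le_rfl, hη1pos.le⟩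
  have hFη1 : 0 < F (η 1) := lt_trans hFE (hmono hEμmem hη1mem hEμlt)
  have hex : ∃ abar, abar ∈ Icc (0:ℝ) (η 1) ∧ F abar = 0 := by
    obtain ⟨x, hx, hfx⟩ := intermediate_value_Icc hη1pos.le hcont ⟨hF0.le, hFη1.le⟩
    exact ⟨x, hx, hfx⟩
  refine ⟨hcont, hmono, hF0, hFE, ?_, ?_⟩
  · obtain ⟨abar, hmem, hz⟩ := hex
    refine ⟨abar, ⟨hmem, hz⟩, ?_⟩
    rintro y ⟨hy, hyz⟩
    exact hmono.injOn hy hmem (by rw [hyz, hz])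
  · intro abar hmem hz
    constructor
    · rcases eq_or_lt_of_le hmem.1 with he | hl
      · rw [← he] at hz
        linarith
      · exact hl
    · by_contra h
      push_neg at h
      rcases eq_or_lt_of_le h with he | hl
      · rw [← he] at hz
        linarith
      · have := hmono hEμmem hmem hl
        linarith
end

section
/- Fix u₀ < 0 and the prior μ, and let v₀ < v₀' ≤ 0 both satisfy the valuable condition, i.e. (1 − v₀)² + u₀ > (E_μ[θ] − v₀)² and (1 − v₀')² + u₀ > (E_μ[θ] − v₀')². Write η(θ) = √((θ − v₀)² + u₀) + v₀ and η'(θ) = √((θ − v₀')² + u₀) + v₀', and let (ā, θ̄) and (ā', θ̄') be the corresponding threshold pairs, where ā is the unique solution of ∫_{θ̄}¹ (η(θ) − ā) dμ(θ) + ā − E_μ[θ] = 0 with η(θ̄) = ā, and similarly for (ā', θ̄') with η'. Then: (a) η'(θ) < η(θ) for every θ ∈ [0,1] at which both are defined; (b) ā < ā' and θ̄ < θ̄'. -/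
/-!
Raising `v₀` lowers `η` because `x ↦ √(x² + u₀) - x = u₀ / (√(x² + u₀) + x)` is increasing when
`u₀ < 0`. Since `η` is increasing, the first-order condition for `(ā, θ̄)` says exactly that
`∫ max (η θ) ā dμ = E_μ[θ]` over `[0, 1]`. This integral is monotone in `ā`, and replacing `η'`
by `η` strictly increases it (strictly because `η' < η` near `θ = 1`, where `μ` has mass), so
`ā < ā'`. Finally `η θ̄ = ā < ā' = η' θ̄' < η θ̄'` and monotonicity of `η` give `θ̄ < θ̄'`.
-/

open MeasureTheory Set

theorem sqrt_sq_add_sub_lt_sqrt_sq_add_sub {u A B : ℝ} (hu : u < 0) (hA : 0 ≤ A)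
    (hAu : 0 ≤ A ^ 2 + u) (hAB : A < B) : √(A ^ 2 + u) - A < √(B ^ 2 + u) - B := by
  have hBu : 0 ≤ B ^ 2 + u := by nlinarith
  have hx := Real.sq_sqrt hAu
  have hy := Real.sq_sqrt hBu
  have hxA : √(A ^ 2 + u) < A := (Real.sqrt_lt' (by nlinarith)).2 (by linarith)
  nlinarith [Real.sqrt_nonneg (A ^ 2 + u), Real.sqrt_nonneg (B ^ 2 + u),
    sq_nonneg (√(B ^ 2 + u) - √(A ^ 2 + u))]

theorem setIntegral_max_const_eq {α : Type*} [MeasurableSpace α] {μ : Measure α}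
    [IsFiniteMeasure μ] {f : α → ℝ} {s t : Set α} {c : ℝ} (hs : MeasurableSet s)
    (ht : MeasurableSet t) (hts : t ⊆ s) (hf : IntegrableOn f s μ)
    (hlo : ∀ x ∈ s \ t, f x ≤ c) (hhi : ∀ x ∈ t, c ≤ f x) :
    ∫ x in s, max (f x) c ∂μ = μ.real s * c + ∫ x in t, (f x - c) ∂μ := by
  have hmax : EqOn (fun x => max (f x) c) (fun x => c + t.indicator (fun x => f x - c) x) s := by
    intro x hx
    by_cases hxt : x ∈ t
    · simp [indicator_of_mem hxt, max_eq_left (hhi x hxt)]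
    · simp [indicator_of_notMem hxt, max_eq_right (hlo x ⟨hx, hxt⟩)]
  have hc : IntegrableOn (fun _ => c) s μ := integrableOn_const
  have hfc : IntegrableOn (fun x => f x - c) s μ := hf.sub hc
  rw [setIntegral_congr_fun hs hmax, integral_add hc (hfc.indicator ht),
    setIntegral_const, setIntegral_indicator ht, inter_eq_right.2 hts, smul_eq_mul]

theorem setIntegral_Icc_pos_of_pos_right {μ : Measure ℝ} [IsFiniteMeasure μ]
    (hfull : ∀ a b : ℝ, 0 ≤ a → a < b → b ≤ 1 → 0 < μ (Ioo a b))
    {k : ℝ → ℝ} (hk : Continuous k) (hk0 : ∀ θ ∈ Icc (0 : ℝ) 1, 0 ≤ k θ) (hk1 : 0 < k 1) :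
    0 < ∫ θ in Icc (0 : ℝ) 1, k θ ∂μ := by
  rw [setIntegral_pos_iff_support_of_nonneg_ae
    ((ae_restrict_iff' measurableSet_Icc).2 (ae_of_all _ hk0)) hk.integrableOn_Icc]
  obtain ⟨l, hl1, hl⟩ := mem_nhdsLT_iff_exists_Ioo_subset.1
    (mem_nhdsWithin_of_mem_nhds (hk.continuousAt.eventually (lt_mem_nhds hk1)))
  refine (hfull (max 0 l) 1 (le_max_left _ _) (max_lt zero_lt_one hl1) le_rfl).trans_le
    (measure_mono fun θ hθ => ⟨(hl ⟨(le_max_right _ _).trans_lt hθ.1, hθ.2⟩).ne', ?_⟩)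
  exact ⟨(le_max_left _ _).trans hθ.1.le, hθ.2.le⟩

theorem setIntegral_max_eq_of_monotoneOn {μ : Measure ℝ} [IsFiniteMeasure μ]
    (hsupp : μ (Icc (0 : ℝ) 1) = 1) {g : ℝ → ℝ} (hg : Continuous g)
    (hgm : MonotoneOn g (Icc 0 1)) {t : ℝ} (ht : t ∈ Icc (0 : ℝ) 1) :
    ∫ θ in Icc (0 : ℝ) 1, max (g θ) (g t) ∂μ = g t + ∫ θ in Icc t 1, (g θ - g t) ∂μ := by
  rw [setIntegral_max_const_eq measurableSet_Icc measurableSet_Icc (Icc_subset_Icc_left ht.1)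
    hg.integrableOn_Icc, measureReal_def, hsupp, ENNReal.toReal_one, one_mul]
  · rintro θ ⟨hθ, hθt⟩
    exact hgm hθ ht (le_of_not_ge fun h => hθt ⟨h, hθ.2⟩)
  · intro θ hθ
    exact hgm ht ⟨ht.1.trans hθ.1, hθ.2⟩ hθ.1

def IsPoolingThreshold (μ : Measure ℝ) (E : ℝ) (g : ℝ → ℝ) (t : ℝ) : Prop :=
  ∫ θ in Icc t 1, (g θ - g t) ∂μ + g t = E

theorem IsPoolingThreshold.apply_lt_apply {μ : Measure ℝ} [IsFiniteMeasure μ]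
    (hsupp : μ (Icc (0 : ℝ) 1) = 1)
    (hfull : ∀ a b : ℝ, 0 ≤ a → a < b → b ≤ 1 → 0 < μ (Ioo a b))
    {E : ℝ} {g g' : ℝ → ℝ} (hg : Continuous g) (hg' : Continuous g')
    (hgm : MonotoneOn g (Icc 0 1)) (hg'm : MonotoneOn g' (Icc 0 1))
    {t t' : ℝ} (ht : t ∈ Icc (0 : ℝ) 1) (ht' : t' ∈ Icc (0 : ℝ) 1)
    (hlt : ∀ θ ∈ Icc t' 1, g' θ < g θ)
    (hpool : IsPoolingThreshold μ E g t) (hpool' : IsPoolingThreshold μ E g' t') :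
    g t < g' t' := by
  have hint : ∀ {f : ℝ → ℝ} (a : ℝ), Continuous f →
      IntegrableOn (fun θ => max (f θ) a) (Icc 0 1) μ :=
    fun a hf => (hf.max continuous_const).integrableOn_Icc
  have hgap : ∫ θ in Icc (0 : ℝ) 1, max (g' θ) (g' t') ∂μ
      < ∫ θ in Icc (0 : ℝ) 1, max (g θ) (g' t') ∂μ := by
    rw [← sub_pos, ← integral_sub (hint _ hg) (hint _ hg')]
    refine setIntegral_Icc_pos_of_pos_right hfull
      ((hg.max continuous_const).sub (hg'.max continuous_const))
      (fun θ hθ => sub_nonneg.2 ?_) (sub_pos.2 ?_)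
    · rcases lt_or_ge θ t' with hθ' | hθ'
      · exact (max_eq_right (hg'm hθ ht' hθ'.le)).trans_le (le_max_right _ _)
      · exact max_le_max (hlt θ ⟨hθ', hθ.2⟩).le le_rfl
    · have h1 : g' t' < g 1 :=
        (hlt t' ⟨le_rfl, ht'.2⟩).trans_le (hgm ht' ⟨zero_le_one, le_rfl⟩ ht'.2)
      exact (max_lt (hlt 1 ⟨ht'.2, le_rfl⟩) h1).trans_le (le_max_left _ _)
  by_contra! h
  have hmono : ∫ θ in Icc (0 : ℝ) 1, max (g θ) (g' t') ∂μ
      ≤ ∫ θ in Icc (0 : ℝ) 1, max (g θ) (g t) ∂μ :=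
    setIntegral_mono_on (hint _ hg) (hint _ hg) measurableSet_Icc
      fun θ _ => max_le_max le_rfl h
  rw [setIntegral_max_eq_of_monotoneOn hsupp hg hgm ht] at hmono
  rw [setIntegral_max_eq_of_monotoneOn hsupp hg' hg'm ht'] at hgap
  unfold IsPoolingThreshold at hpool hpool'
  linarith

noncomputable def separatingAction (u₀ v₀ θ : ℝ) : ℝ := √((θ - v₀) ^ 2 + u₀) + v₀

theorem continuous_separatingAction (u₀ v₀ : ℝ) : Continuous (separatingAction u₀ v₀) := by
  unfold separatingAction
  fun_prop

theorem monotoneOn_separatingAction (u₀ v₀ : ℝ) :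
    MonotoneOn (separatingAction u₀ v₀) (Ici v₀) := by
  intro a ha b _ hab
  have : 0 ≤ a - v₀ := sub_nonneg.2 ha
  unfold separatingAction
  gcongr

theorem separatingAction_lt_of_lt {u₀ v₀ v₀' θ : ℝ} (hu₀ : u₀ < 0) (hv : v₀ < v₀')
    (hθ : v₀' ≤ θ) (hrad : 0 ≤ (θ - v₀') ^ 2 + u₀) :
    separatingAction u₀ v₀' θ < separatingAction u₀ v₀ θ := by
  have := sqrt_sq_add_sub_lt_sqrt_sq_add_sub hu₀ (sub_nonneg.2 hθ) hrad (sub_lt_sub_left hv θ)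
  unfold separatingAction
  linarith

theorem comparative_statics_v₀_general
    (μ : Measure ℝ) [IsProbabilityMeasure μ]
    (hsupp : μ (Icc (0 : ℝ) 1) = 1)
    (hfull : ∀ a b : ℝ, 0 ≤ a → a < b → b ≤ 1 → 0 < μ (Ioo a b))
    (u₀ : ℝ) (hu₀ : u₀ < 0)
    (v₀ v₀' : ℝ) (hvv : v₀ < v₀') (hv₀' : v₀' ≤ 0)
    (Eμ : ℝ)
    (η η' : ℝ → ℝ)
    (hη : ∀ θ, η θ = Real.sqrt ((θ - v₀) ^ 2 + u₀) + v₀)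
    (hη' : ∀ θ, η' θ = Real.sqrt ((θ - v₀') ^ 2 + u₀) + v₀')
    (s s' : ℝ) (hs : s = max 0 (Real.sqrt (-u₀) + v₀)) (hs' : s' = max 0 (Real.sqrt (-u₀) + v₀'))
    (abar θbar abar' θbar' : ℝ)
    (hθbar : θbar ∈ Icc s 1) (hηθbar : η θbar = abar)
    (hFOC : (∫ θ in Icc θbar 1, (η θ - abar) ∂μ) + abar - Eμ = 0)
    (hθbar' : θbar' ∈ Icc s' 1) (hηθbar' : η' θbar' = abar')
    (hFOC' : (∫ θ in Icc θbar' 1, (η' θ - abar') ∂μ) + abar' - Eμ = 0) :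
    (∀ θ ∈ Icc (0 : ℝ) 1, 0 ≤ (θ - v₀) ^ 2 + u₀ → 0 ≤ (θ - v₀') ^ 2 + u₀ → η' θ < η θ) ∧
      abar < abar' ∧ θbar < θbar' := by
  obtain rfl : η = separatingAction u₀ v₀ := funext hη
  obtain rfl : η' = separatingAction u₀ v₀' := funext hη'
  subst hηθbar hηθbar' hs hs'
  have hv₀ : v₀ ≤ 0 := hvv.le.trans hv₀'
  have hθbar₀ : 0 ≤ θbar := (le_max_left _ _).trans hθbar.1
  have hθbar'₀ : 0 ≤ θbar' := (le_max_left _ _).trans hθbar'.1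
  have hmono : ∀ v ≤ 0, MonotoneOn (separatingAction u₀ v) (Icc 0 1) := fun v hv =>
    (monotoneOn_separatingAction u₀ v).mono fun θ hθ => hv.trans hθ.1
  have hlt : ∀ θ, 0 ≤ θ → 0 ≤ (θ - v₀') ^ 2 + u₀ →
      separatingAction u₀ v₀' θ < separatingAction u₀ v₀ θ :=
    fun θ hθ hrad => separatingAction_lt_of_lt hu₀ hvv (hv₀'.trans hθ) hrad
  have hrad' : ∀ θ ∈ Icc θbar' 1, 0 ≤ (θ - v₀') ^ 2 + u₀ := fun θ hθ => by
    have hsqrt : √(-u₀) ≤ θ - v₀' := by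
      linarith [le_max_right 0 (√(-u₀) + v₀'), hθbar'.1, hθ.1]
    linarith [(Real.sqrt_le_iff.1 hsqrt).2]
  have hab := IsPoolingThreshold.apply_lt_apply (E := Eμ) hsupp hfull
    (continuous_separatingAction u₀ v₀) (continuous_separatingAction u₀ v₀')
    (hmono v₀ hv₀) (hmono v₀' hv₀') ⟨hθbar₀, hθbar.2⟩ ⟨hθbar'₀, hθbar'.2⟩
    (fun θ hθ => hlt θ (hθbar'₀.trans hθ.1) (hrad' θ hθ))
    (by unfold IsPoolingThreshold; linarith) (by unfold IsPoolingThreshold; linarith)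
  refine ⟨fun θ hθ _ hrad => hlt θ hθ.1 hrad, hab, ?_⟩
  by_contra! h
  exact (hmono v₀ hv₀ ⟨hθbar'₀, hθbar'.2⟩ ⟨hθbar₀, hθbar.2⟩ h).not_gt
    (hab.trans (hlt θbar' hθbar'₀ (hrad' θbar' ⟨le_rfl, hθbar'.2⟩)))

/-- **Comparative statics in the agent's status quo payoff `v₀`.** Fix `u₀ < 0` and the
prior `μ`, and let `v₀ < v₀' ≤ 0` both satisfy the valuable condition. Then (a) the
separating action decreases pointwise: `η'(θ) < η(θ)` wherever both are defined; and
(b) both the pooling action and the state threshold increase: `ā < ā'` and `θ̄ < θ̄'`. -/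
theorem comparative_statics_v₀
    (μ : Measure ℝ) [IsProbabilityMeasure μ]
    (hsupp : μ (Icc (0 : ℝ) 1) = 1)
    (hfull : ∀ a b : ℝ, 0 ≤ a → a < b → b ≤ 1 → 0 < μ (Ioo a b))
    (u₀ : ℝ) (hu₀ : u₀ < 0)
    (v₀ v₀' : ℝ) (hvv : v₀ < v₀') (hv₀' : v₀' ≤ 0)
    (Eμ : ℝ) (hEμ : Eμ = ∫ θ, θ ∂μ)
    (hval : (Eμ - v₀) ^ 2 < (1 - v₀) ^ 2 + u₀)
    (hval' : (Eμ - v₀') ^ 2 < (1 - v₀') ^ 2 + u₀)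
    (η η' : ℝ → ℝ)
    (hη : ∀ θ, η θ = Real.sqrt ((θ - v₀) ^ 2 + u₀) + v₀)
    (hη' : ∀ θ, η' θ = Real.sqrt ((θ - v₀') ^ 2 + u₀) + v₀')
    (s s' : ℝ) (hs : s = max 0 (Real.sqrt (-u₀) + v₀)) (hs' : s' = max 0 (Real.sqrt (-u₀) + v₀'))
    (abar θbar abar' θbar' : ℝ)
    (hθbar : θbar ∈ Icc s 1) (hηθbar : η θbar = abar)
    (hFOC : (∫ θ in Icc θbar 1, (η θ - abar) ∂μ) + abar - Eμ = 0)
    (hθbar' : θbar' ∈ Icc s' 1) (hηθbar' : η' θbar' = abar')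
    (hFOC' : (∫ θ in Icc θbar' 1, (η' θ - abar') ∂μ) + abar' - Eμ = 0) :
    (∀ θ ∈ Icc (0 : ℝ) 1, 0 ≤ (θ - v₀) ^ 2 + u₀ → 0 ≤ (θ - v₀') ^ 2 + u₀ → η' θ < η θ) ∧
      abar < abar' ∧ θbar < θbar' :=
  comparative_statics_v₀_general μ hsupp hfull u₀ hu₀ v₀ v₀' hvv hv₀' Eμ η η' hη hη' s s' hs hs'
    abar θbar abar' θbar' hθbar hηθbar hFOC hθbar' hηθbar' hFOC'
end

section
/- Assume v₀ ≥ 1, u₀ ≤ 0 and (v₀ − E_μ[θ])² ≥ v₀² + u₀. Then the constant veto mechanism defined by ã*(θ) = E_μ[θ] and p̃*(θ) = 0 for all θ ∈ [0,1] is optimal; that is, the principal chooses E_μ[θ] regardless of the state and never uses veto. -/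
open MeasureTheory Set

/-!
Let `(q, b)` be incentive compatible with agent value `c = q θ v₀ + (1 - q θ) b θ` and write
`E = E_μ[θ]`. State by state, the principal's payoff is at most `-(E - θ)² + 2 (c - E) (θ - E)`:
the difference is `(1 - q)(b - E)² + q ((v₀ - E)² - v₀² - u₀) + q θ (2 v₀ - θ)`, and all three
terms are nonnegative under the hypotheses. The correction `2 (c - E) (θ - E)` has mean zero,
so integrating gives the payoff `-E_μ[(E - θ)²]` of always choosing `E` without veto.
-/

theorem veto_integrand_le {v₀ u₀ E θ q b : ℝ} (hθ₀ : 0 ≤ θ) (hθ : θ ≤ 2 * v₀)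
    (hq₀ : 0 ≤ q) (hq₁ : q ≤ 1) (hval : v₀ ^ 2 + u₀ ≤ (v₀ - E) ^ 2) :
    q * u₀ - (1 - q) * (b - θ) ^ 2 ≤
      -(E - θ) ^ 2 + 2 * (q * v₀ + (1 - q) * b - E) * (θ - E) := by
  have hgap : -(E - θ) ^ 2 + 2 * (q * v₀ + (1 - q) * b - E) * (θ - E)
      - (q * u₀ - (1 - q) * (b - θ) ^ 2)
      = (1 - q) * (b - E) ^ 2 + q * ((v₀ - E) ^ 2 - (v₀ ^ 2 + u₀)) + q * (θ * (2 * v₀ - θ)) := by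
    ring
  have h₁ : 0 ≤ (1 - q) * (b - E) ^ 2 := mul_nonneg (by linarith) (sq_nonneg _)
  have h₂ : 0 ≤ q * ((v₀ - E) ^ 2 - (v₀ ^ 2 + u₀)) := mul_nonneg hq₀ (by linarith)
  have h₃ : 0 ≤ q * (θ * (2 * v₀ - θ)) := mul_nonneg hq₀ (mul_nonneg hθ₀ (by linarith))
  linarith

section ConcentratedOnUnitInterval

variable {μ : Measure ℝ}

theorem integrable_id_of_ae_mem_Icc [IsFiniteMeasure μ] (hμ : ∀ᵐ θ ∂μ, θ ∈ Icc (0 : ℝ) 1) :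
    Integrable (fun θ : ℝ => θ) μ :=
  .of_bound measurable_id.aestronglyMeasurable 1 <| hμ.mono fun θ hθ => by
    rw [Real.norm_eq_abs, abs_le]
    exact ⟨by linarith [hθ.1], hθ.2⟩

theorem integral_id_mem_Icc_of_ae_mem_Icc [IsProbabilityMeasure μ]
    (hμ : ∀ᵐ θ ∂μ, θ ∈ Icc (0 : ℝ) 1) : ∫ θ, θ ∂μ ∈ Icc (0 : ℝ) 1 := by
  refine ⟨integral_nonneg_of_ae (hμ.mono fun θ hθ => hθ.1), ?_⟩
  calc ∫ θ, θ ∂μ ≤ ∫ _, (1 : ℝ) ∂μ :=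
        integral_mono_ae (integrable_id_of_ae_mem_Icc hμ) (integrable_const 1)
          (hμ.mono fun θ hθ => hθ.2)
    _ = 1 := by simp

theorem integrable_sq_sub_of_ae_mem_Icc [IsFiniteMeasure μ] (hμ : ∀ᵐ θ ∂μ, θ ∈ Icc (0 : ℝ) 1)
    (E : ℝ) : Integrable (fun θ : ℝ => (E - θ) ^ 2) μ := by
  refine .of_bound (by fun_prop) ((|E| + 1) ^ 2) <| hμ.mono fun θ hθ => ?_
  rw [Real.norm_eq_abs, abs_of_nonneg (sq_nonneg _)]
  exact sq_le_sq' (by linarith [neg_abs_le E, hθ.2]) (by linarith [le_abs_self E, hθ.1])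

theorem integrable_veto_integrand [IsFiniteMeasure μ] (hμ : ∀ᵐ θ ∂μ, θ ∈ Icc (0 : ℝ) 1)
    {M u₀ : ℝ} {q b : ℝ → ℝ} (hqb : IsVetoMechanism M q b) :
    Integrable (fun θ => q θ * u₀ - (1 - q θ) * (b θ - θ) ^ 2) μ := by
  obtain ⟨hqm, hbm, hq, hb⟩ := hqb
  refine .of_bound (by fun_prop) (|u₀| + (M + 1) ^ 2) <| hμ.mono fun θ hθ => ?_
  obtain ⟨hq₀, hq₁⟩ := hq θ hθ
  obtain ⟨hbM, hbM'⟩ := hb θ hθ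
  have hdist : (b θ - θ) ^ 2 ≤ (M + 1) ^ 2 :=
    sq_le_sq' (by linarith [hθ.2]) (by linarith [hθ.1])
  -- a convex combination of `u₀` and `-(b θ - θ)²`
  rw [Real.norm_eq_abs, abs_le]
  constructor <;>
    nlinarith [neg_abs_le u₀, le_abs_self u₀, mul_nonneg hq₀ (sq_nonneg (b θ - θ)),
      mul_nonneg (sub_nonneg.2 hq₁) (sq_nonneg (b θ - θ)), abs_nonneg u₀]

theorem integral_neg_sq_add_mean_zero [IsProbabilityMeasure μ]
    (hμ : ∀ᵐ θ ∂μ, θ ∈ Icc (0 : ℝ) 1) (c : ℝ) :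
    ∫ θ, (-(∫ x, x ∂μ - θ) ^ 2 + 2 * (c - ∫ x, x ∂μ) * (θ - ∫ x, x ∂μ)) ∂μ
      = ∫ θ, -(∫ x, x ∂μ - θ) ^ 2 ∂μ := by
  have hid := integrable_id_of_ae_mem_Icc hμ
  have hmean : ∫ θ, (θ - ∫ x, x ∂μ) ∂μ = 0 := by
    rw [integral_sub hid (integrable_const _)]
    simp
  have hcorr : Integrable (fun θ => 2 * (c - ∫ x, x ∂μ) * (θ - ∫ x, x ∂μ)) μ :=
    (hid.sub (integrable_const _)).const_mul _
  have hloss : Integrable (fun θ => -(∫ x, x ∂μ - θ) ^ 2) μ :=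
    (integrable_sq_sub_of_ae_mem_Icc hμ _).neg
  rw [integral_add hloss hcorr, integral_const_mul, hmean, mul_zero, add_zero]

end ConcentratedOnUnitInterval

theorem vetoPayoff_le_of_isICVeto {μ : Measure ℝ} [IsProbabilityMeasure μ]
    (hμ : ∀ᵐ θ ∂μ, θ ∈ Icc (0 : ℝ) 1) {M v₀ u₀ : ℝ} (hv₀ : 1 ≤ v₀)
    (hval : v₀ ^ 2 + u₀ ≤ (v₀ - ∫ θ, θ ∂μ) ^ 2) {q b : ℝ → ℝ}
    (hqb : IsVetoMechanism M q b) (hIC : IsICVeto v₀ q b) :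
    vetoPayoff μ u₀ q b ≤ ∫ θ, -(∫ x, x ∂μ - θ) ^ 2 ∂μ := by
  obtain ⟨c, hc⟩ := hIC
  rw [← integral_neg_sq_add_mean_zero hμ c]
  refine integral_mono_ae (integrable_veto_integrand hμ hqb)
    ((integrable_sq_sub_of_ae_mem_Icc hμ _).neg.add
      (((integrable_id_of_ae_mem_Icc hμ).sub (integrable_const _)).const_mul _))
    (hμ.mono fun θ hθ => ?_)
  rw [← hc θ hθ]
  exact veto_integrand_le hθ.1 (by linarith [hθ.2]) (hqb.2.2.1 θ hθ).1 (hqb.2.2.1 θ hθ).2 hval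

theorem optimal_veto_trivial_high_v₀_general
    (μ : Measure ℝ) [IsProbabilityMeasure μ]
    (hsupp : μ (Icc (0 : ℝ) 1) = 1)
    (M v₀ u₀ : ℝ) (hM : 1 < M) (hv₀ : 1 ≤ v₀)
    (Eμ : ℝ) (hEμ : Eμ = ∫ θ, θ ∂μ)
    (hval : v₀ ^ 2 + u₀ ≤ (v₀ - Eμ) ^ 2) :
    IsOptimalVeto μ v₀ u₀ M (fun _ => 0) (fun _ => Eμ) := by
  have hμ : ∀ᵐ θ ∂μ, θ ∈ Icc (0 : ℝ) 1 := (mem_ae_iff_prob_eq_one measurableSet_Icc).2 hsupp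
  have hE : Eμ ∈ Icc (0 : ℝ) 1 := hEμ ▸ integral_id_mem_Icc_of_ae_mem_Icc hμ
  have hpayoff : vetoPayoff μ u₀ (fun _ => 0) (fun _ => Eμ) = ∫ θ, -(Eμ - θ) ^ 2 ∂μ := by
    simp [vetoPayoff]
  refine ⟨⟨measurable_const, measurable_const, fun _ _ => ⟨le_rfl, zero_le_one⟩,
    fun _ _ => ⟨by linarith [hE.1], by linarith [hE.2]⟩⟩, ⟨Eμ, fun _ _ => by ring⟩, ?_⟩
  intro q b hqb hIC
  rw [hpayoff, hEμ]
  exact vetoPayoff_le_of_isICVeto hμ hv₀ (hEμ ▸ hval) hqb hIC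

/-- **Characterization of the optimal veto mechanism (trivial case, `v₀ ≥ 1`).**
If `v₀ ≥ 1`, `u₀ ≤ 0` and `(v₀ − E_μ[θ])² ≥ v₀² + u₀`, then the constant mechanism
choosing `E_μ[θ]` at every state with no veto is an optimal veto mechanism. -/
theorem optimal_veto_trivial_high_v₀
    (μ : Measure ℝ) [IsProbabilityMeasure μ]
    (hsupp : μ (Icc (0 : ℝ) 1) = 1)
    (hfull : ∀ a b : ℝ, 0 ≤ a → a < b → b ≤ 1 → 0 < μ (Ioo a b))
    (M v₀ u₀ : ℝ) (hM : 1 < M) (hv₀ : 1 ≤ v₀) (hu₀ : u₀ ≤ 0)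
    (Eμ : ℝ) (hEμ : Eμ = ∫ θ, θ ∂μ)
    (hval : v₀ ^ 2 + u₀ ≤ (v₀ - Eμ) ^ 2) :
    IsOptimalVeto μ v₀ u₀ M (fun _ => 0) (fun _ => Eμ) :=
  optimal_veto_trivial_high_v₀_general μ hsupp M v₀ u₀ hM hv₀ Eμ hEμ hval
end

section
/- Fix v₀ ≤ 0, u₀ < 0, a state θ ∈ [0,1], an agent utility level v̂ ∈ (v₀, 1], and M > 1. Define g(a) = ((a − v̂)/(a − v₀))·u₀ − ((v̂ − v₀)/(a − v₀))·(a − θ)² for a ∈ [v̂, M]. Let a* = max{v̂, √((θ − v₀)² + u₀) + v₀} if (θ − v₀)² + u₀ ≥ 0, and a* = v̂ otherwise. Then a* ∈ [v̂, M] and g(a) ≤ g(a*) for every a ∈ [v̂, M]; that is, the state-wise principal problem of choosing the non-status quo option, with the veto probability determined by the agent's indifference constraint, is maximized at a*. -/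
open Set

/-- **The state-wise principal problem.** Fix `v₀ ≤ 0`, `u₀ < 0`, a state `θ ∈ [0,1]`, an
agent utility level `v̂ ∈ (v₀, 1]` and `M > 1`. With the veto probability pinned down by
the agent's indifference constraint, the principal's payoff from proposing `a` at state `θ`
is `g(a) = ((a − v̂)/(a − v₀))·u₀ − ((v̂ − v₀)/(a − v₀))·(a − θ)²`, and it is maximized on
`[v̂, M]` at `a* = max{v̂, √((θ − v₀)² + u₀) + v₀}` when `(θ − v₀)² + u₀ ≥ 0` and at
`a* = v̂` otherwise. -/
theorem statewise_maximization
    (v₀ u₀ θ vhat M : ℝ) (hv₀ : v₀ ≤ 0) (hu₀ : u₀ < 0)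
    (hθ : θ ∈ Icc (0 : ℝ) 1) (hvhat : vhat ∈ Ioc v₀ 1) (hM : 1 < M)
    (g : ℝ → ℝ)
    (hg : ∀ a, g a = (a - vhat) / (a - v₀) * u₀ - (vhat - v₀) / (a - v₀) * (a - θ) ^ 2)
    (astar : ℝ)
    (hastar : astar = if 0 ≤ (θ - v₀) ^ 2 + u₀ then
        max vhat (Real.sqrt ((θ - v₀) ^ 2 + u₀) + v₀) else vhat) :
    astar ∈ Icc vhat M ∧ ∀ a ∈ Icc vhat M, g a ≤ g astar := by
  obtain ⟨hθ0, hθ1⟩ := hθ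
  obtain ⟨hv1, hv2⟩ := hvhat
  have hvM : vhat ≤ M := hv2.trans hM.le
  have htv : 0 ≤ θ - v₀ := by linarith
  have hsqrt_le : ∀ h : 0 ≤ (θ - v₀) ^ 2 + u₀,
      Real.sqrt ((θ - v₀) ^ 2 + u₀) ≤ θ - v₀ := by
    intro h
    have h1 : Real.sqrt ((θ - v₀) ^ 2 + u₀) ≤ Real.sqrt ((θ - v₀) ^ 2) :=
      Real.sqrt_le_sqrt (by linarith)
    rwa [Real.sqrt_sq htv] at h1
  have hmem : astar ∈ Icc vhat M := by
    rw [hastar]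
    split_ifs with h
    · refine ⟨le_max_left _ _, max_le hvM ?_⟩
      have := hsqrt_le h
      linarith
    · exact ⟨le_refl _, hvM⟩
  refine ⟨hmem, ?_⟩
  intro a ha
  obtain ⟨ha1, ha2⟩ := ha
  have hax : 0 < a - v₀ := by linarith
  have hsx : 0 < astar - v₀ := by
    have := hmem.1; linarith
  have hvp : 0 ≤ vhat - v₀ := by linarith
  -- key inequality
  have key : 0 ≤ (a - astar) * ((a - v₀) * (astar - v₀) - ((θ - v₀) ^ 2 + u₀)) := by
    by_cases hK : 0 ≤ (θ - v₀) ^ 2 + u₀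
    · have hs0 : 0 ≤ Real.sqrt ((θ - v₀) ^ 2 + u₀) := Real.sqrt_nonneg _
      have hs2 : Real.sqrt ((θ - v₀) ^ 2 + u₀) ^ 2 = (θ - v₀) ^ 2 + u₀ :=
        Real.sq_sqrt hK
      rw [hastar, if_pos hK]
      rcases le_or_gt (max vhat (Real.sqrt ((θ - v₀) ^ 2 + u₀) + v₀)) a with hle | hlt
      · have h2 : Real.sqrt ((θ - v₀) ^ 2 + u₀) + v₀ ≤ a :=
          le_trans (le_max_right _ _) hle
        have h3 : Real.sqrt ((θ - v₀) ^ 2 + u₀) ≤ a - v₀ := by linarith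
        have h4 : Real.sqrt ((θ - v₀) ^ 2 + u₀) ≤ max vhat (Real.sqrt ((θ - v₀) ^ 2 + u₀) + v₀) - v₀ := by
          have := le_max_right vhat (Real.sqrt ((θ - v₀) ^ 2 + u₀) + v₀); linarith
        apply mul_nonneg (by linarith)
        nlinarith [mul_le_mul h3 h4 hs0 hax.le]
      · have hmax : max vhat (Real.sqrt ((θ - v₀) ^ 2 + u₀) + v₀)
            = Real.sqrt ((θ - v₀) ^ 2 + u₀) + v₀ := by
          rcases max_cases vhat (Real.sqrt ((θ - v₀) ^ 2 + u₀) + v₀) with ⟨h4, h5⟩ | ⟨h4, h5⟩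
          · rw [h4] at hlt; linarith
          · exact h4
        rw [hmax] at hlt ⊢
        have h3 : a - v₀ < Real.sqrt ((θ - v₀) ^ 2 + u₀) := by linarith
        have h5 : (a - v₀) * (Real.sqrt ((θ - v₀) ^ 2 + u₀) + v₀ - v₀) - ((θ - v₀) ^ 2 + u₀) ≤ 0 := by
          nlinarith [mul_le_mul_of_nonneg_right h3.le hs0]
        have h6 := mul_nonneg (by linarith : (0:ℝ) ≤ Real.sqrt ((θ - v₀) ^ 2 + u₀) + v₀ - a)
          (by linarith : (0:ℝ) ≤ ((θ - v₀) ^ 2 + u₀) - (a - v₀) * (Real.sqrt ((θ - v₀) ^ 2 + u₀) + v₀ - v₀))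
        nlinarith [h6]
    · rw [hastar, if_neg hK]
      apply mul_nonneg (by linarith)
      nlinarith
  rw [hg, hg]
  rw [div_mul_eq_mul_div, div_mul_eq_mul_div, div_sub_div_same,
      div_mul_eq_mul_div, div_mul_eq_mul_div, div_sub_div_same,
      div_le_div_iff₀ hax hsx]
  nlinarith [mul_nonneg hvp key]
end

section
/- Assume v₀ ≤ 0, u₀ < 0 and u₀ + v₀² > 0, so that η(θ) = √((θ − v₀)² + u₀) + v₀ is defined on all of [0,1] with η(θ) > v₀. Define, for v̂ ∈ [v₀, η(0)], Γ₁(v̂) = ∫₀¹ [ ((η(θ) − v̂)/(η(θ) − v₀))·u₀ − ((v̂ − v₀)/(η(θ) − v₀))·(η(θ) − θ)² ] dμ(θ). Then Γ₁ is strictly increasing on [v₀, η(0)]; in particular its maximum on this interval is attained at v̂ = η(0). -/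
open MeasureTheory Set

/-!
The integrand is affine in `v̂`: the two lottery weights sum to one, so it equals
`u₀ + (v̂ − v₀) g(θ)` with `g(θ) = (−u₀ − (η(θ) − θ)²) / (η(θ) − v₀)`. Writing `x = θ − v₀ ≥ 0`
and `s = √(x² + u₀) < x`, one has `(η(θ) − θ)² = (s − x)² < −u₀`, so `g > 0` on `[0,1]` and
`Γ₁` is an affine function of `v̂` with positive slope `∫ g dμ`.
-/

lemma sq_sqrt_sq_add_sub_lt_neg {x u : ℝ} (hx : 0 ≤ x) (hu : u < 0) (hxu : 0 < x ^ 2 + u) :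
    (√(x ^ 2 + u) - x) ^ 2 < -u := by
  have hs_pos : 0 < √(x ^ 2 + u) := Real.sqrt_pos.2 hxu
  have hs_sq : √(x ^ 2 + u) ^ 2 = x ^ 2 + u := Real.sq_sqrt hxu.le
  have hs_lt : √(x ^ 2 + u) < x :=
    calc √(x ^ 2 + u) < √(x ^ 2) := Real.sqrt_lt_sqrt hxu.le (by linarith)
      _ = x := Real.sqrt_sq hx
  nlinarith

lemma lottery_eq_add_mul {e v v₀ u w : ℝ} (he : e ≠ v₀) :
    (e - v) / (e - v₀) * u - (v - v₀) / (e - v₀) * w = u + (v - v₀) * ((-u - w) / (e - v₀)) := by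
  have : e - v₀ ≠ 0 := sub_ne_zero.2 he
  field_simp
  ring

section Integral

variable {α : Type*} [MeasurableSpace α] {μ : Measure α} {s : Set α} {g : α → ℝ}

lemma setIntegral_pos_of_forall_mem_pos (hs : MeasurableSet s) (hμs : μ s ≠ 0)
    (hg : IntegrableOn g s μ) (hpos : ∀ x ∈ s, 0 < g x) : 0 < ∫ x in s, g x ∂μ := by
  have hnonneg : 0 ≤ᵐ[μ.restrict s] g :=
    (ae_restrict_iff' hs).2 (ae_of_all _ fun x hx => (hpos x hx).le)
  rw [setIntegral_pos_iff_support_of_nonneg_ae hnonneg hg,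
    inter_eq_self_of_subset_right fun x hx => Function.mem_support.2 (hpos x hx).ne']
  exact pos_iff_ne_zero.2 hμs

lemma strictMono_setIntegral_const_add_mul [IsFiniteMeasure μ] (hg : IntegrableOn g s μ)
    (hpos : 0 < ∫ x in s, g x ∂μ) (c v₀ : ℝ) :
    StrictMono fun v => ∫ x in s, (c + (v - v₀) * g x) ∂μ := by
  have h_affine : ∀ v, ∫ x in s, (c + (v - v₀) * g x) ∂μ
      = μ.real s • c + (v - v₀) * ∫ x in s, g x ∂μ := fun v => by
    rw [integral_add (integrable_const c) (hg.const_mul _), setIntegral_const, integral_const_mul]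
  intro a b hab
  simp only [h_affine]
  gcongr

end Integral

theorem gamma1_strictMono_general
    (μ : Measure ℝ) [IsProbabilityMeasure μ]
    (hsupp : μ (Icc (0 : ℝ) 1) = 1)
    (v₀ u₀ : ℝ) (hv₀ : v₀ ≤ 0) (hu₀ : u₀ < 0) (hpos : 0 < u₀ + v₀ ^ 2)
    (η : ℝ → ℝ) (hη : ∀ θ, η θ = Real.sqrt ((θ - v₀) ^ 2 + u₀) + v₀)
    (Γ₁ : ℝ → ℝ)
    (hΓ₁ : ∀ vhat, Γ₁ vhat = ∫ θ in Icc (0 : ℝ) 1,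
        ((η θ - vhat) / (η θ - v₀) * u₀ - (vhat - v₀) / (η θ - v₀) * (η θ - θ) ^ 2) ∂μ) :
    (∀ θ ∈ Icc (0 : ℝ) 1, v₀ < η θ) ∧
      StrictMonoOn Γ₁ (Icc v₀ (η 0)) ∧
      ∀ vhat ∈ Icc v₀ (η 0), Γ₁ vhat ≤ Γ₁ (η 0) := by
  have hrad : ∀ θ ∈ Icc (0 : ℝ) 1, 0 < (θ - v₀) ^ 2 + u₀ := fun θ hθ => by
    nlinarith [hθ.1]
  have hη_gt : ∀ θ ∈ Icc (0 : ℝ) 1, v₀ < η θ := fun θ hθ => by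
    rw [hη θ]
    linarith [Real.sqrt_pos.2 (hrad θ hθ)]
  set g : ℝ → ℝ := fun θ => (-u₀ - (η θ - θ) ^ 2) / (η θ - v₀)
  have hg_pos : ∀ θ ∈ Icc (0 : ℝ) 1, 0 < g θ := fun θ hθ => by
    have hgap : (η θ - θ) ^ 2 < -u₀ := by
      rw [hη θ, show √((θ - v₀) ^ 2 + u₀) + v₀ - θ = √((θ - v₀) ^ 2 + u₀) - (θ - v₀) by ring]
      exact sq_sqrt_sq_add_sub_lt_neg (by linarith [hθ.1]) hu₀ (hrad θ hθ)
    exact div_pos (by linarith) (sub_pos.2 (hη_gt θ hθ))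
  have hg_int : IntegrableOn g (Icc 0 1) μ := by
    have hη_cont : Continuous η := by
      rw [funext hη]
      fun_prop
    refine ContinuousOn.integrableOn_compact isCompact_Icc (ContinuousOn.div ?_ ?_ ?_)
    · fun_prop
    · fun_prop
    · exact fun θ hθ => (sub_pos.2 (hη_gt θ hθ)).ne'
  have hΓ₁_eq : Γ₁ = fun v => ∫ θ in Icc (0 : ℝ) 1, (u₀ + (v - v₀) * g θ) ∂μ :=
    funext fun v => (hΓ₁ v).trans <| setIntegral_congr_fun measurableSet_Icc fun θ hθ =>
      lottery_eq_add_mul (hη_gt θ hθ).ne'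
  have hslope : 0 < ∫ θ in Icc (0 : ℝ) 1, g θ ∂μ :=
    setIntegral_pos_of_forall_mem_pos measurableSet_Icc (by simp [hsupp]) hg_int hg_pos
  have hmono : StrictMonoOn Γ₁ (Icc v₀ (η 0)) := by
    rw [hΓ₁_eq]
    exact (strictMono_setIntegral_const_add_mul hg_int hslope u₀ v₀).strictMonoOn _
  have hη0 : η 0 ∈ Icc v₀ (η 0) := right_mem_Icc.2 (hη_gt 0 (left_mem_Icc.2 zero_le_one)).le
  exact ⟨hη_gt, hmono, fun v hv => hmono.monotoneOn hv hη0 hv.2⟩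

/-- **`Γ₁` is strictly increasing.** Assume `v₀ ≤ 0`, `u₀ < 0` and `u₀ + v₀² > 0`, so that
`η(θ) = √((θ − v₀)² + u₀) + v₀` is defined on all of `[0,1]` with `η(θ) > v₀`. Then the
principal's ex ante payoff
`Γ₁(v̂) = ∫₀¹ [((η(θ) − v̂)/(η(θ) − v₀))·u₀ − ((v̂ − v₀)/(η(θ) − v₀))·(η(θ) − θ)²] dμ`
is strictly increasing on `[v₀, η(0)]`; in particular it is maximized there at `v̂ = η(0)`. -/
theorem gamma1_strictMono
    (μ : Measure ℝ) [IsProbabilityMeasure μ]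
    (hsupp : μ (Icc (0 : ℝ) 1) = 1)
    (hfull : ∀ a b : ℝ, 0 ≤ a → a < b → b ≤ 1 → 0 < μ (Ioo a b))
    (v₀ u₀ : ℝ) (hv₀ : v₀ ≤ 0) (hu₀ : u₀ < 0) (hpos : 0 < u₀ + v₀ ^ 2)
    (η : ℝ → ℝ) (hη : ∀ θ, η θ = Real.sqrt ((θ - v₀) ^ 2 + u₀) + v₀)
    (Γ₁ : ℝ → ℝ)
    (hΓ₁ : ∀ vhat, Γ₁ vhat = ∫ θ in Icc (0 : ℝ) 1,
        ((η θ - vhat) / (η θ - v₀) * u₀ - (vhat - v₀) / (η θ - v₀) * (η θ - θ) ^ 2) ∂μ) :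
    (∀ θ ∈ Icc (0 : ℝ) 1, v₀ < η θ) ∧
      StrictMonoOn Γ₁ (Icc v₀ (η 0)) ∧
      ∀ vhat ∈ Icc v₀ (η 0), Γ₁ vhat ≤ Γ₁ (η 0) :=
  gamma1_strictMono_general μ hsupp v₀ u₀ hv₀ hu₀ hpos η hη Γ₁ hΓ₁
end

section
/- In the two-state example, the maximum of the principal's expected payoff over all incentive-compatible direct mechanisms equals 3/4, and it is attained by the veto mechanism α(θ₁) = δ_{a₁} and α(θ₂) = (1/2)·δ_{a₀} + (1/2)·δ_{a₂}. In particular, for every incentive-compatible direct mechanism the principal's expected payoff (1/2)·∑_i u(a_i, θ₁)·α(θ₁)(a_i) + (1/2)·∑_i u(a_i, θ₂)·α(θ₂)(a_i) is at most 3/4, and the displayed mechanism is incentive compatible and achieves exactly 3/4. -/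
open Finset

/-- A direct mechanism in the two-state example: a probability distribution over the three
options `a₀, a₁, a₂` for each of the two states. -/
def ExampleMech (α : Fin 2 → Fin 3 → ℝ) : Prop :=
  (∀ i j, 0 ≤ α i j) ∧ ∀ i, ∑ j, α i j = 1

/-- Incentive compatibility in the two-state example: the agent (with state-independent
payoffs `v = (0, 1, 2)`) gets the same expected payoff from either report. -/
def ExampleIC (α : Fin 2 → Fin 3 → ℝ) : Prop :=
  ∑ j, (![0, 1, 2] : Fin 3 → ℝ) j * α 0 j = ∑ j, (![0, 1, 2] : Fin 3 → ℝ) j * α 1 j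

/-- The principal's expected payoff in the two-state example, with equally likely states and
payoffs `u(a₀,·) = 0`, `u(a₁,θ₁) = 1`, `u(a₁,θ₂) = −3`, `u(a₂,θ₁) = −3`, `u(a₂,θ₂) = 1`. -/
noncomputable def examplePayoff (α : Fin 2 → Fin 3 → ℝ) : ℝ :=
  (1 / 2) * (∑ j, (![0, 1, -3] : Fin 3 → ℝ) j * α 0 j) +
    (1 / 2) * (∑ j, (![0, -3, 1] : Fin 3 → ℝ) j * α 1 j)

/-- **The motivating example.** Every incentive-compatible direct mechanism yields the
principal at most `3/4`, and the veto mechanism `α(θ₁) = δ_{a₁}`,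
`α(θ₂) = (1/2)·δ_{a₀} + (1/2)·δ_{a₂}` is incentive compatible and attains exactly `3/4`. -/
theorem example_optimal_value :
    (∀ α : Fin 2 → Fin 3 → ℝ, ExampleMech α → ExampleIC α → examplePayoff α ≤ 3 / 4) ∧
      ExampleMech ![![0, 1, 0], ![1 / 2, 0, 1 / 2]] ∧
      ExampleIC ![![0, 1, 0], ![1 / 2, 0, 1 / 2]] ∧
      examplePayoff ![![0, 1, 0], ![1 / 2, 0, 1 / 2]] = 3 / 4 := by
  refine ⟨?_, ⟨?_, ?_⟩, ?_, ?_⟩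
  · intro α ⟨hpos, hsum⟩ hic
    have h0 := hsum 0
    have h1 := hsum 1
    unfold ExampleIC at hic
    simp [Fin.sum_univ_three] at h0 h1 hic
    unfold examplePayoff
    simp [Fin.sum_univ_three]
    have := hpos 0 0; have := hpos 0 1; have := hpos 0 2
    have := hpos 1 0; have := hpos 1 1; have := hpos 1 2
    linarith
  · intro i j
    fin_cases i <;> fin_cases j <;> norm_num
  · intro i
    fin_cases i <;> simp [Fin.sum_univ_three] <;> norm_num
  · unfold ExampleIC; simp [Fin.sum_univ_three]
  · unfold examplePayoff; simp [Fin.sum_univ_three]; norm_num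
end

section
/- In the less-risk-averse-principal example, for every ε > 0 there exists an incentive-compatible direct mechanism whose principal ex ante payoff ∫₀¹ ∫_A u(a, θ) dα_θ(a) dμ(θ) is at least −ε. Consequently, the supremum of the principal's ex ante payoff over incentive-compatible direct mechanisms equals 0, the first-best value, although no mechanism attains it. -/
open MeasureTheory Set

/- ### Auxiliary two-point mixture measures -/

noncomputable def twoPtLRA (p q x y : ℝ) : Measure ℝ :=
  ENNReal.ofReal p • Measure.dirac x + ENNReal.ofReal q • Measure.dirac y

lemma integrable_dirac_LRA (f : ℝ → ℝ) (x : ℝ) : Integrable f (Measure.dirac x) :=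
  (integrable_const (f x)).congr (ae_eq_dirac f).symm

lemma twoPtLRA_integrable (p q x y : ℝ) (f : ℝ → ℝ) : Integrable f (twoPtLRA p q x y) :=
  ((integrable_dirac_LRA f x).smul_measure ENNReal.ofReal_ne_top).add_measure
    ((integrable_dirac_LRA f y).smul_measure ENNReal.ofReal_ne_top)

lemma twoPtLRA_integral (p q x y : ℝ) (hp : 0 ≤ p) (hq : 0 ≤ q) (f : ℝ → ℝ) :
    ∫ a, f a ∂(twoPtLRA p q x y) = p * f x + q * f y := by
  rw [twoPtLRA, integral_add_measure
      ((integrable_dirac_LRA f x).smul_measure ENNReal.ofReal_ne_top)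
      ((integrable_dirac_LRA f y).smul_measure ENNReal.ofReal_ne_top),
    integral_smul_measure, integral_smul_measure, integral_dirac, integral_dirac,
    ENNReal.toReal_ofReal hp, ENNReal.toReal_ofReal hq, smul_eq_mul, smul_eq_mul]

lemma twoPtLRA_prob (p q x y : ℝ) (hp : 0 ≤ p) (hq : 0 ≤ q) (hpq : p + q = 1) :
    IsProbabilityMeasure (twoPtLRA p q x y) := by
  constructor
  simp only [twoPtLRA, Measure.add_apply, Measure.smul_apply, smul_eq_mul,
    MeasureTheory.Measure.dirac_apply' _ MeasurableSet.univ]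
  simp [← ENNReal.ofReal_add hp hq, hpq]

lemma twoPtLRA_apply (p q x y : ℝ) (s : Set ℝ) (hs : MeasurableSet s) (hx : x ∈ s) (hy : y ∈ s)
    (hp : 0 ≤ p) (hq : 0 ≤ q) (hpq : p + q = 1) : twoPtLRA p q x y s = 1 := by
  simp only [twoPtLRA, Measure.add_apply, Measure.smul_apply, smul_eq_mul,
    MeasureTheory.Measure.dirac_apply' _ hs]
  simp [indicator_of_mem hx, indicator_of_mem hy, ← ENNReal.ofReal_add hp hq, hpq]

lemma twoPtLRA_measurable (p q : ℝ) (x y : ℝ → ℝ) (hx : Measurable x) (hy : Measurable y) :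
    Measurable (fun θ => twoPtLRA p q (x θ) (y θ)) := by
  apply Measure.measurable_of_measurable_coe
  intro s hs
  simp only [twoPtLRA, Measure.add_apply, Measure.smul_apply, smul_eq_mul,
    MeasureTheory.Measure.dirac_apply' _ hs]
  exact ((measurable_one.indicator hs).comp hx).const_mul _ |>.add
    (((measurable_one.indicator hs).comp hy).const_mul _)

/- ### The explicit near-first-best mechanism -/

noncomputable def projLRA (θ : ℝ) : ℝ := max 0 (min θ 1)

noncomputable def BLRA (q θ : ℝ) : ℝ :=
  1 - Real.sqrt ((1 - (1 - q) * (1 - projLRA θ) ^ 2) / q)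

lemma projLRA_mem (θ : ℝ) : projLRA θ ∈ Icc (0:ℝ) 1 :=
  ⟨le_max_left _ _, max_le (by norm_num) (min_le_right _ _)⟩

lemma projLRA_eq {θ : ℝ} (h : θ ∈ Icc (0:ℝ) 1) : projLRA θ = θ := by
  simp [projLRA, min_eq_left h.2, max_eq_right h.1]

lemma projLRA_cont : Continuous projLRA :=
  continuous_const.max (continuous_id.min continuous_const)

lemma BLRA_cont (q : ℝ) : Continuous (BLRA q) :=
  continuous_const.sub (Real.continuous_sqrt.comp
    ((continuous_const.sub (continuous_const.mul
      ((continuous_const.sub projLRA_cont).pow 2))).div_const q))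

lemma sLRA_nonneg {q : ℝ} (hq0 : 0 < q) (hq1 : q ≤ 1) (θ : ℝ) :
    0 ≤ (1 - (1 - q) * (1 - projLRA θ) ^ 2) / q := by
  have h := projLRA_mem θ
  have h1 : (1 - projLRA θ) ^ 2 ≤ 1 := by nlinarith [h.1, h.2]
  have h2 : (1 - q) * (1 - projLRA θ) ^ 2 ≤ 1 := by nlinarith [sq_nonneg (1 - projLRA θ)]
  exact div_nonneg (by linarith) hq0.le

lemma sLRA_le {q : ℝ} (hq0 : 0 < q) (hq1 : q ≤ 1) (θ : ℝ) :
    (1 - (1 - q) * (1 - projLRA θ) ^ 2) / q ≤ 1 / q := by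
  gcongr
  nlinarith [mul_nonneg (by linarith : (0:ℝ) ≤ 1 - q) (sq_nonneg (1 - projLRA θ))]

lemma BLRA_le_one {q : ℝ} (θ : ℝ) : BLRA q θ ≤ 1 := by
  have := Real.sqrt_nonneg ((1 - (1 - q) * (1 - projLRA θ) ^ 2) / q)
  unfold BLRA; linarith

lemma sqrt_sLRA_le {q : ℝ} (hq0 : 0 < q) (hq1 : q ≤ 1) (θ : ℝ) :
    Real.sqrt ((1 - (1 - q) * (1 - projLRA θ) ^ 2) / q) ≤ 1 / Real.sqrt q := by
  calc Real.sqrt ((1 - (1 - q) * (1 - projLRA θ) ^ 2) / q)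
      ≤ Real.sqrt (1 / q) := Real.sqrt_le_sqrt (sLRA_le hq0 hq1 θ)
    _ = 1 / Real.sqrt q := by rw [one_div, Real.sqrt_inv, one_div]

lemma ae_mem_Icc_LRA (μ : Measure ℝ) [IsProbabilityMeasure μ]
    (hsupp : μ (Icc (0:ℝ) 1) = 1) : ∀ᵐ θ ∂μ, θ ∈ Icc (0:ℝ) 1 := by
  have h : μ (Icc (0:ℝ) 1)ᶜ = 0 := by
    rw [measure_compl measurableSet_Icc (measure_ne_top μ _), hsupp, measure_univ, tsub_self]
  rw [ae_iff]
  simpa [compl_def] using h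

lemma ae_mem_S_LRA (a₀ : ℝ) {ν : Measure ℝ} [IsProbabilityMeasure ν]
    (hS : ν (Iic 1 ∪ {a₀}) = 1) : ∀ᵐ a ∂ν, a ∈ Iic (1:ℝ) ∪ {a₀} := by
  have h : ν (Iic (1:ℝ) ∪ {a₀})ᶜ = 0 := by
    rw [measure_compl (measurableSet_Iic.union (measurableSet_singleton _))
      (measure_ne_top ν _), hS, measure_univ, tsub_self]
  rw [ae_iff]; simpa [compl_def] using h

/- ### Statement definitions -/

/-- A direct mechanism in the less-risk-averse-principal example: states in `[0,1]`, options
in `A = (−∞, 1] ∪ {a₀}` with `a₀ > 1`. -/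
def IsMechLRA (a₀ : ℝ) (u : ℝ → ℝ → ℝ) (v : ℝ → ℝ) (μ : Measure ℝ)
    (α : ℝ → Measure ℝ) : Prop :=
  Measurable α ∧ (∀ θ : ℝ, IsProbabilityMeasure (α θ)) ∧
    (∀ θ : ℝ, α θ (Iic 1 ∪ {a₀}) = 1) ∧
    (∀ θ : ℝ, Integrable (fun a => u a θ) (α θ)) ∧
    (∀ θ : ℝ, Integrable v (α θ)) ∧
    Integrable (fun θ => ∫ a, u a θ ∂(α θ)) μ ∧
    Integrable (fun θ => ∫ a, v a ∂(α θ)) μ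

/-- Incentive compatibility: the agent's expected payoff is constant on the state space. -/
def IsICLRA (v : ℝ → ℝ) (α : ℝ → Measure ℝ) : Prop :=
  ∃ c : ℝ, ∀ θ ∈ Icc (0 : ℝ) 1, ∫ a, v a ∂(α θ) = c

/-- The principal's ex ante payoff. -/
noncomputable def payoffLRA (u : ℝ → ℝ → ℝ) (μ : Measure ℝ) (α : ℝ → Measure ℝ) : ℝ :=
  ∫ θ, (∫ a, u a θ ∂(α θ)) ∂μ

/- ### Existence of ε-optimal mechanisms -/

lemma mechLRA_works
    (μ : Measure ℝ) [IsProbabilityMeasure μ] (hsupp : μ (Icc (0:ℝ) 1) = 1)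
    (a₀ : ℝ)
    (u : ℝ → ℝ → ℝ) (v : ℝ → ℝ)
    (hu : ∀ θ : ℝ, ∀ a ≤ (1:ℝ), u a θ = -|a - θ|)
    (hv : ∀ a ≤ (1:ℝ), v a = -(1 - a) ^ 2)
    (q : ℝ) (hq0 : 0 < q) (hq1 : q ≤ 1) :
    ∃ α : ℝ → Measure ℝ, IsMechLRA a₀ u v μ α ∧ IsICLRA v α ∧
      -(q + Real.sqrt q) ≤ payoffLRA u μ α := by
  set α : ℝ → Measure ℝ := fun θ => twoPtLRA (1 - q) q (projLRA θ) (BLRA q θ) with hα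
  have hp : (0:ℝ) ≤ 1 - q := by linarith
  have hpq : (1 - q) + q = 1 := by ring
  have hsq0 := Real.sqrt_nonneg q
  have hsqles : ∀ θ, Real.sqrt ((1 - (1 - q) * (1 - projLRA θ) ^ 2) / q) ≤ 1 / Real.sqrt q :=
    fun θ => sqrt_sLRA_le hq0 hq1 θ
  have hsqnn : ∀ θ, 0 ≤ Real.sqrt ((1 - (1 - q) * (1 - projLRA θ) ^ 2) / q) :=
    fun θ => Real.sqrt_nonneg _
  have hint_u : ∀ θ, ∫ a, u a θ ∂(α θ)
      = (1 - q) * (-|projLRA θ - θ|) + q * (-|BLRA q θ - θ|) := by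
    intro θ
    rw [hα, twoPtLRA_integral _ _ _ _ hp hq0.le, hu θ _ (projLRA_mem θ).2,
      hu θ _ (BLRA_le_one θ)]
  have hint_v : ∀ θ, ∫ a, v a ∂(α θ) = -1 := by
    intro θ
    rw [hα, twoPtLRA_integral _ _ _ _ hp hq0.le, hv _ (projLRA_mem θ).2, hv _ (BLRA_le_one θ)]
    have hBsq : (1 - BLRA q θ) ^ 2 = (1 - (1 - q) * (1 - projLRA θ) ^ 2) / q := by
      have h : 1 - BLRA q θ = Real.sqrt ((1 - (1 - q) * (1 - projLRA θ) ^ 2) / q) := by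
        unfold BLRA; ring
      rw [h, Real.sq_sqrt (sLRA_nonneg hq0 hq1 θ)]
    rw [hBsq]
    field_simp
    ring
  have hbound : ∀ θ ∈ Icc (0:ℝ) 1, |BLRA q θ - θ| ≤ 1 + 1 / Real.sqrt q := by
    intro θ hθ
    have h1 := hsqles θ
    have h2 := hsqnn θ
    have hq1s : 0 ≤ 1 / Real.sqrt q := by positivity
    rw [abs_le]
    unfold BLRA
    constructor <;> [skip; skip] <;> nlinarith [hθ.1, hθ.2]
  have hC : q * (1 + 1 / Real.sqrt q) = q + Real.sqrt q := by
    rw [mul_add, mul_one, mul_one_div, Real.div_sqrt]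
  have hval : ∀ θ ∈ Icc (0:ℝ) 1,
      (1 - q) * (-|projLRA θ - θ|) + q * (-|BLRA q θ - θ|) = q * (-|BLRA q θ - θ|) := by
    intro θ hθ
    rw [projLRA_eq hθ, sub_self, abs_zero]
    ring
  have hmem := ae_mem_Icc_LRA μ hsupp
  have hcontu : Continuous fun θ =>
      (1 - q) * (-|projLRA θ - θ|) + q * (-|BLRA q θ - θ|) :=
    (continuous_const.mul ((projLRA_cont.sub continuous_id).abs.neg)).add
      (continuous_const.mul (((BLRA_cont q).sub continuous_id).abs.neg))
  have hfu : (fun θ => ∫ a, u a θ ∂(α θ))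
      = fun θ => (1 - q) * (-|projLRA θ - θ|) + q * (-|BLRA q θ - θ|) := funext hint_u
  have hintegu : Integrable (fun θ => ∫ a, u a θ ∂(α θ)) μ := by
    rw [hfu]
    refine Integrable.mono' (integrable_const (q + Real.sqrt q))
      hcontu.aestronglyMeasurable ?_
    filter_upwards [hmem] with θ hθ
    rw [hval θ hθ, Real.norm_eq_abs, abs_mul, abs_neg, abs_abs, abs_of_nonneg hq0.le, ← hC]
    exact mul_le_mul_of_nonneg_left (hbound θ hθ) hq0.le
  refine ⟨α, ⟨?_, ?_, ?_, ?_, ?_, hintegu, ?_⟩, ⟨-1, fun θ _ => hint_v θ⟩, ?_⟩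
  · exact twoPtLRA_measurable _ _ _ _ projLRA_cont.measurable (BLRA_cont q).measurable
  · exact fun θ => twoPtLRA_prob _ _ _ _ hp hq0.le hpq
  · intro θ
    exact twoPtLRA_apply _ _ _ _ _ (measurableSet_Iic.union (measurableSet_singleton _))
      (Or.inl (projLRA_mem θ).2) (Or.inl (BLRA_le_one θ)) hp hq0.le hpq
  · exact fun θ => twoPtLRA_integrable _ _ _ _ _
  · exact fun θ => twoPtLRA_integrable _ _ _ _ _
  · rw [funext hint_v]; exact integrable_const _
  · unfold payoffLRA
    rw [hfu]
    have h1 : ∫ θ, (-(q + Real.sqrt q) : ℝ) ∂μ = -(q + Real.sqrt q) := by simp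
    rw [← h1]
    apply integral_mono_ae (integrable_const _) (hfu ▸ hintegu)
    filter_upwards [hmem] with θ hθ
    rw [hval θ hθ, ← hC]
    have := hbound θ hθ
    nlinarith [abs_nonneg (BLRA q θ - θ)]

/- ### Nonpositivity and strict negativity -/

lemma u_ae_nonpos_LRA (a₀ u₀ : ℝ) (hu₀ : u₀ < 0)
    (u : ℝ → ℝ → ℝ) (hu : ∀ θ : ℝ, ∀ a ≤ (1 : ℝ), u a θ = -|a - θ|)
    (hua₀ : ∀ θ : ℝ, u a₀ θ = u₀)
    {ν : Measure ℝ} [IsProbabilityMeasure ν] (θ : ℝ)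
    (hS : ν (Iic 1 ∪ {a₀}) = 1) : ∀ᵐ a ∂ν, u a θ ≤ 0 := by
  filter_upwards [ae_mem_S_LRA a₀ hS] with a ha
  rcases ha with ha | ha
  · rw [hu θ a ha]; simp [abs_nonneg]
  · rw [mem_singleton_iff] at ha; rw [ha, hua₀]; exact hu₀.le

lemma payoff_nonpos_LRA
    (μ : Measure ℝ) [IsProbabilityMeasure μ]
    (a₀ u₀ : ℝ) (hu₀ : u₀ < 0)
    (u : ℝ → ℝ → ℝ) (v : ℝ → ℝ)
    (hu : ∀ θ : ℝ, ∀ a ≤ (1 : ℝ), u a θ = -|a - θ|)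
    (hua₀ : ∀ θ : ℝ, u a₀ θ = u₀)
    (α : ℝ → Measure ℝ) (hm : IsMechLRA a₀ u v μ α) : payoffLRA u μ α ≤ 0 := by
  have := hm.2.1
  apply integral_nonpos
  intro θ
  exact integral_nonpos_of_ae (u_ae_nonpos_LRA a₀ u₀ hu₀ u hu hua₀ θ (hm.2.2.1 θ))

lemma payoff_neg_LRA
    (μ : Measure ℝ) [IsProbabilityMeasure μ]
    (hsupp : μ (Icc (0 : ℝ) 1) = 1)
    (hfull : ∀ a b : ℝ, 0 ≤ a → a < b → b ≤ 1 → 0 < μ (Ioo a b))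
    (a₀ u₀ : ℝ) (ha₀ : 1 < a₀) (hu₀ : u₀ < 0)
    (u : ℝ → ℝ → ℝ) (v : ℝ → ℝ)
    (hu : ∀ θ : ℝ, ∀ a ≤ (1 : ℝ), u a θ = -|a - θ|) (hua₀ : ∀ θ : ℝ, u a₀ θ = u₀)
    (hv : ∀ a ≤ (1 : ℝ), v a = -(1 - a) ^ 2)
    (α : ℝ → Measure ℝ) (hm : IsMechLRA a₀ u v μ α) (hic : IsICLRA v α) :
    payoffLRA u μ α < 0 := by
  have := hm.2.1
  refine lt_of_le_of_ne (payoff_nonpos_LRA μ a₀ u₀ hu₀ u v hu hua₀ α hm) ?_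
  intro h0
  obtain ⟨c, hc⟩ := hic
  -- a.e. state has zero principal payoff
  have hInonpos : ∀ θ, ∫ a, u a θ ∂(α θ) ≤ 0 := fun θ =>
    integral_nonpos_of_ae (u_ae_nonpos_LRA a₀ u₀ hu₀ u hu hua₀ θ (hm.2.2.1 θ))
  have hI0 : ∀ᵐ θ ∂μ, ∫ a, u a θ ∂(α θ) = 0 := by
    have hneg : Integrable (fun θ => -∫ a, u a θ ∂(α θ)) μ := hm.2.2.2.2.2.1.neg
    have h := (integral_eq_zero_iff_of_nonneg_ae
      (Filter.Eventually.of_forall fun θ => by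
        simpa using hInonpos θ) hneg).mp ?_
    · filter_upwards [h] with θ hθ
      simpa using hθ
    · rw [integral_neg]
      simpa [payoffLRA] using congrArg Neg.neg h0
  -- hence a.e. θ satisfies -(1-θ)² = c
  have hae2 : ∀ᵐ θ ∂μ, -(1 - θ) ^ 2 = c := by
    filter_upwards [ae_mem_Icc_LRA μ hsupp, hI0] with θ hθ hIθ
    haveI := hm.2.1 θ
    have huz : ∀ᵐ a ∂(α θ), u a θ = 0 := by
      have h := (integral_eq_zero_iff_of_nonneg_ae
        ((u_ae_nonpos_LRA a₀ u₀ hu₀ u hu hua₀ θ (hm.2.2.1 θ)).mono fun a ha => by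
          simpa using ha)
        ((hm.2.2.2.1 θ).neg)).mp (by
          rw [show (-fun a => u a θ) = fun a => -(u a θ) from rfl, integral_neg, hIθ, neg_zero])
      filter_upwards [h] with a ha
      simpa using ha
    have haeq : ∀ᵐ a ∂(α θ), v a = v θ := by
      filter_upwards [ae_mem_S_LRA a₀ (hm.2.2.1 θ), huz] with a haS hau
      rcases haS with haS | haS
      · rw [hu θ a haS] at hau
        have : a = θ := by
          have := abs_eq_zero.mp (by linarith : |a - θ| = 0)
          linarith
        rw [this]
      · rw [mem_singleton_iff] at haS
        rw [haS, hua₀] at hau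
        exact absurd hau hu₀.ne
    have hvint : ∫ a, v a ∂(α θ) = v θ := by
      rw [integral_congr_ae haeq]
      simp
    rw [← hc θ hθ, hvint, hv θ hθ.2]
  -- find two states with the same value of (1-θ)², contradiction
  rw [ae_iff] at hae2
  have h1 : μ (Ioo (0:ℝ) (1/2) \ {θ | ¬-(1 - θ) ^ 2 = c}) = μ (Ioo (0:ℝ) (1/2)) :=
    measure_diff_null hae2
  have h2 : μ (Ioo (1/2:ℝ) 1 \ {θ | ¬-(1 - θ) ^ 2 = c}) = μ (Ioo (1/2:ℝ) 1) :=
    measure_diff_null hae2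
  obtain ⟨θ₁, hθ₁A, hθ₁T⟩ := nonempty_of_measure_ne_zero
    (h1 ▸ (hfull 0 (1/2) le_rfl (by norm_num) (by norm_num)).ne')
  obtain ⟨θ₂, hθ₂A, hθ₂T⟩ := nonempty_of_measure_ne_zero
    (h2 ▸ (hfull (1/2) 1 (by norm_num) (by norm_num) le_rfl).ne')
  have e1 : -(1 - θ₁) ^ 2 = c := not_not.mp hθ₁T
  have e2 : -(1 - θ₂) ^ 2 = c := not_not.mp hθ₂T
  have := hθ₁A.1; have := hθ₁A.2; have := hθ₂A.1; have := hθ₂A.2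
  nlinarith

/- ### Main theorem -/

/-- **Near first-best without veto when the principal is less risk-averse.** In the example
with principal payoff `−|a − θ|` and agent payoff `−(1 − a)²` on `(−∞, 1]`, for every
`ε > 0` there is an incentive-compatible direct mechanism with principal ex ante payoff at
least `−ε`; hence the supremum of the principal's payoff over incentive-compatible
mechanisms is `0`, the first-best value, although no mechanism attains it. -/
theorem near_first_best
    (μ : Measure ℝ) [IsProbabilityMeasure μ]
    (hsupp : μ (Icc (0 : ℝ) 1) = 1)
    (hfull : ∀ a b : ℝ, 0 ≤ a → a < b → b ≤ 1 → 0 < μ (Ioo a b))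
    (a₀ u₀ v₀ : ℝ) (ha₀ : 1 < a₀) (hu₀ : u₀ < 0)
    (u : ℝ → ℝ → ℝ) (v : ℝ → ℝ)
    (hu : ∀ θ : ℝ, ∀ a ≤ (1 : ℝ), u a θ = -|a - θ|) (hua₀ : ∀ θ : ℝ, u a₀ θ = u₀)
    (hv : ∀ a ≤ (1 : ℝ), v a = -(1 - a) ^ 2) (hva₀ : v a₀ = v₀) :
    (∀ ε > (0 : ℝ), ∃ α : ℝ → Measure ℝ,
        IsMechLRA a₀ u v μ α ∧ IsICLRA v α ∧ -ε ≤ payoffLRA u μ α) ∧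
      IsLUB {x : ℝ | ∃ α : ℝ → Measure ℝ,
        IsMechLRA a₀ u v μ α ∧ IsICLRA v α ∧ payoffLRA u μ α = x} 0 ∧
      ∀ α : ℝ → Measure ℝ, IsMechLRA a₀ u v μ α → IsICLRA v α → payoffLRA u μ α < 0 := by
  have part1 : ∀ ε > (0 : ℝ), ∃ α : ℝ → Measure ℝ,
      IsMechLRA a₀ u v μ α ∧ IsICLRA v α ∧ -ε ≤ payoffLRA u μ α := by
    intro ε hε
    set q : ℝ := min 1 (ε ^ 2 / 4) with hqdef
    have hq0 : 0 < q := lt_min one_pos (by positivity)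
    have hq1 : q ≤ 1 := min_le_left _ _
    obtain ⟨α, hmech, hic, hpay⟩ := mechLRA_works μ hsupp a₀ u v hu hv q hq0 hq1
    refine ⟨α, hmech, hic, le_trans ?_ hpay⟩
    rw [neg_le_neg_iff]
    rcases le_or_gt ε 2 with hε2 | hε2
    · have hle1 : ε ^ 2 / 4 ≤ 1 := by nlinarith
      have hq : q = ε ^ 2 / 4 := min_eq_right hle1
      have hsq : Real.sqrt q = ε / 2 := by
        rw [hq, show ε ^ 2 / 4 = (ε / 2) ^ 2 by ring, Real.sqrt_sq (by positivity)]
      rw [hsq, hq]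
      nlinarith
    · have hq : q = 1 := min_eq_left (by nlinarith)
      rw [hq, Real.sqrt_one]
      linarith
  refine ⟨part1, ⟨?_, ?_⟩, fun α hm hic =>
    payoff_neg_LRA μ hsupp hfull a₀ u₀ ha₀ hu₀ u v hu hua₀ hv α hm hic⟩
  · rintro x ⟨α, hm, _, rfl⟩
    exact payoff_nonpos_LRA μ a₀ u₀ hu₀ u v hu hua₀ α hm
  · intro b hb
    by_contra hb0
    push_neg at hb0
    obtain ⟨α, hm, hic, hpay⟩ := part1 (-b / 2) (by linarith)
    have hmem : payoffLRA u μ α ∈ {x : ℝ | ∃ α : ℝ → Measure ℝ,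
        IsMechLRA a₀ u v μ α ∧ IsICLRA v α ∧ payoffLRA u μ α = x} := ⟨α, hm, hic, rfl⟩
    have := hb hmem
    linarith
end

section
/- Assume μ is the uniform (Lebesgue) distribution on [0,1], v₀ = 1/2, and u₀ ∈ (−1/4, 0). Then the deterministic veto mechanism defined by ã*(θ) = 1/2 and p̃*(θ) = 0 for θ ∈ [1/2 − √(−u₀), 1/2 + √(−u₀)], and p̃*(θ) = 1 (with ã*(θ) arbitrary measurable) for all other θ, is optimal: it is incentive compatible (the agent's payoff is 1/2 at every state) and its principal payoff is greater than or equal to that of every incentive-compatible veto mechanism. -/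
open MeasureTheory Set

lemma Continuous.integrable_of_ae_mem_compact {X E : Type*} [MeasurableSpace X]
    [TopologicalSpace X] [OpensMeasurableSpace X] [T2Space X] [NormedAddCommGroup E]
    {μ : Measure X} [IsFiniteMeasure μ] {K : Set X} {f : X → E} (hf : Continuous f)
    (hK : IsCompact K) (hμ : ∀ᵐ x ∂μ, x ∈ K) : Integrable f μ := by
  rw [← Measure.restrict_eq_self_of_ae_mem hμ]
  exact hf.continuousOn.integrableOn_compact hK

section Pointwise

variable {p a u₀ v₀ θ : ℝ}

lemma vetoIntegrand_le (hp0 : 0 ≤ p) (hp1 : p ≤ 1) :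
    p * u₀ - (1 - p) * (a - θ) ^ 2 ≤
      max u₀ (-(v₀ - θ) ^ 2) - 2 * ((1 - p) * (a - v₀)) * (v₀ - θ) := by
  have hmix : p * u₀ + (1 - p) * (-(v₀ - θ) ^ 2) ≤ max u₀ (-(v₀ - θ) ^ 2) := by
    nlinarith [le_max_left u₀ (-(v₀ - θ) ^ 2), le_max_right u₀ (-(v₀ - θ) ^ 2)]
  nlinarith [mul_nonneg (sub_nonneg.2 hp1) (sq_nonneg (a - v₀))]

lemma vetoIntegrand_abs_le {M : ℝ} (hp : p ∈ Icc (0 : ℝ) 1) (ha : a ∈ Icc (-M) M)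
    (hθ : θ ∈ Icc (0 : ℝ) 1) :
    |p * u₀ - (1 - p) * (a - θ) ^ 2| ≤ |u₀| + (M + 1) ^ 2 := by
  obtain ⟨hp0, hp1⟩ := hp
  have hsq : (a - θ) ^ 2 ≤ (M + 1) ^ 2 :=
    sq_le_sq' (by linarith [ha.1, hθ.2]) (by linarith [ha.2, hθ.1])
  rw [abs_le]
  constructor <;>
    nlinarith [neg_abs_le u₀, le_abs_self u₀, sq_nonneg (a - θ),
      mul_nonneg (sub_nonneg.2 hp1) (sq_nonneg (a - θ)), mul_nonneg hp0 (abs_nonneg u₀)]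

lemma mem_Icc_sqrt_iff (hu₀ : u₀ ≤ 0) :
    θ ∈ Icc (v₀ - √(-u₀)) (v₀ + √(-u₀)) ↔ u₀ ≤ -(v₀ - θ) ^ 2 := by
  rw [← mem_Icc_iff_abs_le, Real.le_sqrt (abs_nonneg _) (neg_nonneg.2 hu₀), sq_abs]
  constructor <;> intro h <;> linarith

lemma vetoIntegrand_eq_max_of_cutoff (hu₀ : u₀ ≤ 0)
    (hp : p = if θ ∈ Icc (v₀ - √(-u₀)) (v₀ + √(-u₀)) then 0 else 1)
    (ha : θ ∈ Icc (v₀ - √(-u₀)) (v₀ + √(-u₀)) → a = v₀) :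
    p * u₀ - (1 - p) * (a - θ) ^ 2 = max u₀ (-(v₀ - θ) ^ 2) := by
  by_cases h : θ ∈ Icc (v₀ - √(-u₀)) (v₀ + √(-u₀))
  · rw [hp, if_pos h, ha h, max_eq_right ((mem_Icc_sqrt_iff hu₀).1 h)]
    ring
  · rw [hp, if_neg h, max_eq_left (le_of_not_ge (mt (mem_Icc_sqrt_iff hu₀).2 h))]
    ring

end Pointwise

section Optimality

variable {μ : Measure ℝ} {M u₀ v₀ : ℝ} {p a : ℝ → ℝ}

lemma IsVetoMechanism.integrable [IsFiniteMeasure μ] (hμ : ∀ᵐ θ ∂μ, θ ∈ Icc (0 : ℝ) 1)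
    (h : IsVetoMechanism M p a) :
    Integrable (fun θ => p θ * u₀ - (1 - p θ) * (a θ - θ) ^ 2) μ := by
  obtain ⟨hpm, ham, hp, ha⟩ := h
  refine Integrable.of_bound (by fun_prop) (|u₀| + (M + 1) ^ 2) ?_
  filter_upwards [hμ] with θ hθ
  exact vetoIntegrand_abs_le (hp θ hθ) (ha θ hθ) hθ

theorem vetoPayoff_le_integral_max [IsProbabilityMeasure μ]
    (hμ : ∀ᵐ θ ∂μ, θ ∈ Icc (0 : ℝ) 1) (hmean : ∫ θ, θ ∂μ = v₀)
    (h : IsVetoMechanism M p a) (hic : IsICVeto v₀ p a) :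
    vetoPayoff μ u₀ p a ≤ ∫ θ, max u₀ (-(v₀ - θ) ^ 2) ∂μ := by
  obtain ⟨vhat, hvhat⟩ := hic
  have hbound : ∀ᵐ θ ∂μ, p θ * u₀ - (1 - p θ) * (a θ - θ) ^ 2 ≤
      max u₀ (-(v₀ - θ) ^ 2) - 2 * (vhat - v₀) * (v₀ - θ) := by
    filter_upwards [hμ] with θ hθ
    have hshift : (1 - p θ) * (a θ - v₀) = vhat - v₀ := by linear_combination hvhat θ hθ
    exact hshift ▸ vetoIntegrand_le (h.2.2.1 θ hθ).1 (h.2.2.1 θ hθ).2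
  have hmax : Integrable (fun θ => max u₀ (-(v₀ - θ) ^ 2)) μ :=
    Continuous.integrable_of_ae_mem_compact (by fun_prop) isCompact_Icc hμ
  have hid : Integrable (fun θ : ℝ => θ) μ :=
    continuous_id.integrable_of_ae_mem_compact isCompact_Icc hμ
  have hlin : ∫ θ, (v₀ - θ) ∂μ = 0 := by
    rw [integral_sub (integrable_const _) hid, hmean]
    simp
  have hlinInt : Integrable (fun θ => 2 * (vhat - v₀) * (v₀ - θ)) μ :=
    ((integrable_const v₀).sub hid).const_mul _
  calc vetoPayoff μ u₀ p a
      ≤ ∫ θ, (max u₀ (-(v₀ - θ) ^ 2) - 2 * (vhat - v₀) * (v₀ - θ)) ∂μ :=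
        integral_mono_ae (h.integrable hμ) (hmax.sub hlinInt) hbound
    _ = ∫ θ, max u₀ (-(v₀ - θ) ^ 2) ∂μ := by
        rw [integral_sub hmax hlinInt, integral_const_mul, hlin, mul_zero, sub_zero]

end Optimality

theorem deterministic_optimal_mechanism_general
    (μ : Measure ℝ) (hμ : μ = volume.restrict (Icc (0 : ℝ) 1))
    (M u₀ : ℝ) (hu₀ : u₀ ∈ Ioo (-(1 / 4) : ℝ) 0)
    (pf : ℝ → ℝ)
    (hpf : ∀ θ, pf θ =
      if θ ∈ Icc (1 / 2 - Real.sqrt (-u₀)) (1 / 2 + Real.sqrt (-u₀)) then 0 else 1)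
    (af : ℝ → ℝ) (hafm : Measurable af)
    (hafr : ∀ θ ∈ Icc (0 : ℝ) 1, af θ ∈ Icc (-M) M)
    (hafc : ∀ θ ∈ Icc (1 / 2 - Real.sqrt (-u₀)) (1 / 2 + Real.sqrt (-u₀)), af θ = 1 / 2) :
    (∀ θ ∈ Icc (0 : ℝ) 1, pf θ * (1 / 2) + (1 - pf θ) * af θ = 1 / 2) ∧
      IsOptimalVeto μ (1 / 2) u₀ M pf af := by
  subst hμ
  have : IsProbabilityMeasure (volume.restrict (Icc (0 : ℝ) 1)) := ⟨by simp⟩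
  have hIC : ∀ θ ∈ Icc (0 : ℝ) 1, pf θ * (1 / 2) + (1 - pf θ) * af θ = 1 / 2 := by
    intro θ _
    rw [hpf θ]
    split_ifs with h
    · rw [hafc θ h]; ring
    · ring
  have hpfm : Measurable pf := by
    rw [funext hpf]
    exact Measurable.ite measurableSet_Icc measurable_const measurable_const
  have hpfr : ∀ θ ∈ Icc (0 : ℝ) 1, pf θ ∈ Icc (0 : ℝ) 1 := by
    intro θ _
    rw [hpf θ]
    split_ifs <;> simp
  have hmean : ∫ θ in Icc (0 : ℝ) 1, θ = 1 / 2 := by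
    rw [integral_Icc_eq_integral_Ioc, ← intervalIntegral.integral_of_le zero_le_one, integral_id]
    norm_num
  refine ⟨hIC, ⟨hpfm, hafm, hpfr, hafr⟩, ⟨1 / 2, hIC⟩, fun q b hq hicq => ?_⟩
  calc vetoPayoff _ u₀ q b
      ≤ ∫ θ in Icc (0 : ℝ) 1, max u₀ (-(1 / 2 - θ) ^ 2) :=
        vetoPayoff_le_integral_max (ae_restrict_mem measurableSet_Icc) hmean hq hicq
    _ = vetoPayoff _ u₀ pf af :=
        integral_congr_ae <| ae_of_all _ fun θ =>
          (vetoIntegrand_eq_max_of_cutoff hu₀.2.le (hpf θ) (hafc θ)).symm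

/-- **A deterministic optimal mechanism for `v₀ = 1/2`.** With the uniform prior on `[0,1]`,
`v₀ = 1/2` and `u₀ ∈ (−1/4, 0)`, the deterministic veto mechanism that chooses `1/2` with no
veto on `[1/2 − √(−u₀), 1/2 + √(−u₀)]` and vetoes with probability one elsewhere (with the
proposed action arbitrary measurable there) is optimal; it is incentive compatible with agent
payoff `1/2` at every state. -/
theorem deterministic_optimal_mechanism
    (μ : Measure ℝ) (hμ : μ = volume.restrict (Icc (0 : ℝ) 1))
    (M u₀ : ℝ) (hM : 1 < M) (hu₀ : u₀ ∈ Ioo (-(1 / 4) : ℝ) 0)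
    (pf : ℝ → ℝ)
    (hpf : ∀ θ, pf θ =
      if θ ∈ Icc (1 / 2 - Real.sqrt (-u₀)) (1 / 2 + Real.sqrt (-u₀)) then 0 else 1)
    (af : ℝ → ℝ) (hafm : Measurable af)
    (hafr : ∀ θ ∈ Icc (0 : ℝ) 1, af θ ∈ Icc (-M) M)
    (hafc : ∀ θ ∈ Icc (1 / 2 - Real.sqrt (-u₀)) (1 / 2 + Real.sqrt (-u₀)), af θ = 1 / 2) :
    (∀ θ ∈ Icc (0 : ℝ) 1, pf θ * (1 / 2) + (1 - pf θ) * af θ = 1 / 2) ∧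
      IsOptimalVeto μ (1 / 2) u₀ M pf af :=
  deterministic_optimal_mechanism_general μ hμ M u₀ hu₀ pf hpf af hafm hafr hafc
end
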